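/- arXiv:2204.10022 — 11 statements merged into one kernel-verified Lean document; each statement's English description precedes it below -/
import Mathlib

section
/- Let μ be a probability measure on ℝ supported in [−C, C], let Λ > 1, and for measurable w : ℝ → [0,1] define F(w) = (∫ y dμ + (Λ²−1)·∫ y·w(y) dμ) / (1 + (Λ²−1)·∫ w(y) dμ). Then for every measurable w : ℝ → [0,1] and every γ ∈ ℝ, letting w_γ be the indicator of [γ, ∞), if γ = F(w_γ) (i.e., γ is a fixed point of the threshold map), then F(w) ≤ F(w_γ). In other words, the supremum of F over all measurable w : ℝ → [0,1] is attained by a nondecreasing indicator (step) function. -/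
open MeasureTheory

lemma aux_int_bdd (μ : Measure ℝ) [IsProbabilityMeasure μ] (C : ℝ)
    (hsupp : ∀ᵐ y ∂μ, y ∈ Set.Icc (-C) C)
    (v : ℝ → ℝ) (hv : Measurable v) (hv01 : ∀ y, v y ∈ Set.Icc (0:ℝ) 1) :
    Integrable v μ ∧ Integrable (fun y => y * v y) μ := by
  constructor
  · refine Integrable.mono' (integrable_const 1) hv.aestronglyMeasurable ?_
    refine ae_of_all _ fun y => ?_
    rw [Real.norm_eq_abs, abs_le]
    exact ⟨by linarith [(hv01 y).1], (hv01 y).2⟩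
  · refine Integrable.mono' (integrable_const C) ((measurable_id.mul hv).aestronglyMeasurable) ?_
    filter_upwards [hsupp] with y hy
    rw [Real.norm_eq_abs, abs_mul]
    calc |y| * |v y| ≤ C * 1 := by
          apply mul_le_mul
          · rw [abs_le]; exact ⟨hy.1, hy.2⟩
          · rw [abs_le]; exact ⟨by linarith [(hv01 y).1], (hv01 y).2⟩
          · exact abs_nonneg _
          · linarith [abs_le.mp (abs_le.mpr ⟨hy.1, hy.2⟩)]
      _ = C := mul_one C

/-- If `γ` is a fixed point of the threshold map `γ ↦ F(1_{[γ,∞)})`, then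
`F(w) ≤ F(1_{[γ,∞)})` for every measurable `w : ℝ → [0,1]`. -/
theorem stmt_3 (μ : Measure ℝ) [IsProbabilityMeasure μ] (C : ℝ) (hC : 0 < C)
    (hsupp : ∀ᵐ y ∂μ, y ∈ Set.Icc (-C) C) (Λ : ℝ) (hΛ : 1 < Λ)
    (w : ℝ → ℝ) (hw : Measurable w) (hw01 : ∀ y, w y ∈ Set.Icc (0:ℝ) 1)
    (γ : ℝ)
    (hfix : γ = (∫ y, y ∂μ + (Λ ^ 2 - 1) * ∫ y, y * Set.indicator (Set.Ici γ) 1 y ∂μ) /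
        (1 + (Λ ^ 2 - 1) * ∫ y, Set.indicator (Set.Ici γ) 1 y ∂μ)) :
    (∫ y, y ∂μ + (Λ ^ 2 - 1) * ∫ y, y * w y ∂μ) /
        (1 + (Λ ^ 2 - 1) * ∫ y, w y ∂μ)
    ≤ (∫ y, y ∂μ + (Λ ^ 2 - 1) * ∫ y, y * Set.indicator (Set.Ici γ) 1 y ∂μ) /
        (1 + (Λ ^ 2 - 1) * ∫ y, Set.indicator (Set.Ici γ) 1 y ∂μ) := by
  set ι : ℝ → ℝ := Set.indicator (Set.Ici γ) 1 with hι
  have hιmeas : Measurable ι := measurable_one.indicator measurableSet_Ici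
  have hι01 : ∀ y, ι y ∈ Set.Icc (0:ℝ) 1 := by
    intro y
    by_cases h : y ∈ Set.Ici γ <;>
      simp [hι, Set.indicator_apply, h]
  obtain ⟨hIw, hIyw⟩ := aux_int_bdd μ C hsupp w hw hw01
  obtain ⟨hIι, hIyι⟩ := aux_int_bdd μ C hsupp ι hιmeas hι01
  have hpos : (0:ℝ) < Λ ^ 2 - 1 := by nlinarith
  have hDw : (0:ℝ) < 1 + (Λ ^ 2 - 1) * ∫ y, w y ∂μ := by
    have h1 : 0 ≤ ∫ y, w y ∂μ := integral_nonneg fun y => (hw01 y).1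
    nlinarith
  have hDι : (0:ℝ) < 1 + (Λ ^ 2 - 1) * ∫ y, ι y ∂μ := by
    have h1 : 0 ≤ ∫ y, ι y ∂μ := integral_nonneg fun y => (hι01 y).1
    nlinarith
  -- fixed point equation
  rw [eq_div_iff hDι.ne'] at hfix
  -- key integral inequality
  have hew : ∫ y, (y - γ) * w y ∂μ = ∫ y, y * w y ∂μ - γ * ∫ y, w y ∂μ := by
    rw [← integral_const_mul, ← integral_sub hIyw (hIw.const_mul γ)]
    congr 1; ext y; ring
  have heι : ∫ y, (y - γ) * ι y ∂μ = ∫ y, y * ι y ∂μ - γ * ∫ y, ι y ∂μ := by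
    rw [← integral_const_mul, ← integral_sub hIyι (hIι.const_mul γ)]
    congr 1; ext y; ring
  have hIw' : Integrable (fun y => (y - γ) * w y) μ := by
    have : (fun y => (y - γ) * w y) = fun y => y * w y - γ * w y := by ext y; ring
    rw [this]; exact hIyw.sub (hIw.const_mul γ)
  have hIι' : Integrable (fun y => (y - γ) * ι y) μ := by
    have : (fun y => (y - γ) * ι y) = fun y => y * ι y - γ * ι y := by ext y; ring
    rw [this]; exact hIyι.sub (hIι.const_mul γ)
  have key : ∫ y, (y - γ) * w y ∂μ ≤ ∫ y, (y - γ) * ι y ∂μ := by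
    refine integral_mono hIw' hIι' fun y => ?_
    by_cases h : y ∈ Set.Ici γ
    · have h1 : ι y = 1 := by simp [hι, Set.indicator_apply, h]
      have h2 : γ ≤ y := h
      rw [h1, mul_one]
      nlinarith [(hw01 y).2]
    · have h1 : ι y = 0 := by simp [hι, Set.indicator_apply, h]
      have h2 : y < γ := lt_of_not_ge h
      rw [h1, mul_zero]
      nlinarith [(hw01 y).1]
  rw [hew, heι] at key
  rw [div_le_div_iff₀ hDw hDι]
  nlinarith [mul_le_mul_of_nonneg_left key hpos.le]
end

section
/- Let μ be a probability measure on ℝ supported in [−C, C] and Λ > 1. Define F(w) = (∫ y dμ + (Λ²−1)·∫ y·w dμ)/(1 + (Λ²−1)·∫ w dμ) for measurable w : ℝ → [0,1]. Then sup over all measurable w : ℝ → [0,1] of F(w) equals the sup of F(w) over nondecreasing measurable w : ℝ → [0,1]. -/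
/-!
`F(w)` is the mean of the tilted measure `(1 + c w) μ` with `c = Λ² - 1 ≥ 0`, so `F(w) ≥ a` exactly
when `∫ (y - a) (1 + c w(y)) dμ ≥ 0`. For `a = F(w)`, replacing `w` by the indicator of `(a, ∞)`
can only increase `∫ (y - a) w(y) dμ`, because `(y - a) w(y) ≤ (y - a) 𝟙(y > a)` pointwise; hence
every value of `F` is dominated by a value at a nondecreasing weight. Two sets of reals that
dominate each other have the same `sSup`, bounded or not.
-/

open MeasureTheory Set

noncomputable def tiltedMean (μ : Measure ℝ) (c : ℝ) (w : ℝ → ℝ) : ℝ :=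
  (∫ y, y ∂μ + c * ∫ y, y * w y ∂μ) / (1 + c * ∫ y, w y ∂μ)

lemma monotone_indicator_Ioi_one (a : ℝ) : Monotone ((Ioi a).indicator (1 : ℝ → ℝ)) := by
  intro y z hyz
  by_cases hy : y ∈ Ioi a
  · simp [hy, mem_Ioi.2 (lt_of_lt_of_le hy hyz)]
  · simp only [indicator_of_notMem hy]
    exact indicator_nonneg (fun _ _ => zero_le_one) z

lemma indicator_Ioi_one_mem_Icc (a y : ℝ) : (Ioi a).indicator (1 : ℝ → ℝ) y ∈ Icc 0 1 := by
  by_cases hy : y ∈ Ioi a <;> simp [hy]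

lemma sub_mul_le_sub_mul_indicator_Ioi {a y t : ℝ} (ht : t ∈ Icc 0 1) :
    (y - a) * t ≤ (y - a) * (Ioi a).indicator 1 y := by
  by_cases hy : a < y
  · simpa [hy] using mul_le_mul_of_nonneg_left ht.2 (sub_nonneg.2 hy.le)
  · simpa [hy] using mul_nonpos_of_nonpos_of_nonneg (sub_nonpos.2 (not_lt.1 hy)) ht.1

section

variable {μ : Measure ℝ} {w : ℝ → ℝ}

lemma integrable_id_mul_of_forall_mem_Icc (hy : Integrable (fun y => y) μ) (hw : Measurable w)
    (hw01 : ∀ y, w y ∈ Icc 0 1) : Integrable (fun y => y * w y) μ := by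
  simpa only [mul_comm] using hy.bdd_mul (c := 1) hw.aestronglyMeasurable
    (ae_of_all _ fun y => by simpa [abs_le] using ⟨by linarith [(hw01 y).1], (hw01 y).2⟩)

variable [IsFiniteMeasure μ]

lemma integrable_of_forall_mem_Icc (hw : Measurable w) (hw01 : ∀ y, w y ∈ Icc 0 1) :
    Integrable w μ :=
  Integrable.of_mem_Icc 0 1 hw.aemeasurable (ae_of_all _ hw01)

lemma integral_sub_mul_le_integral_sub_mul_indicator_Ioi (hy : Integrable (fun y => y) μ)
    (hw : Measurable w) (hw01 : ∀ y, w y ∈ Icc 0 1) (a : ℝ) :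
    ∫ y, y * w y ∂μ - a * ∫ y, w y ∂μ ≤
      ∫ y, y * (Ioi a).indicator 1 y ∂μ - a * ∫ y, (Ioi a).indicator 1 y ∂μ := by
  have hv : Measurable ((Ioi a).indicator (1 : ℝ → ℝ)) :=
    measurable_const.indicator measurableSet_Ioi
  have hv01 := indicator_Ioi_one_mem_Icc a
  have hw_int := integrable_of_forall_mem_Icc (μ := μ) hw hw01
  have hv_int := integrable_of_forall_mem_Icc (μ := μ) hv hv01
  have hyw_int := integrable_id_mul_of_forall_mem_Icc hy hw hw01
  have hyv_int := integrable_id_mul_of_forall_mem_Icc hy hv hv01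
  rw [← integral_const_mul, ← integral_const_mul, ← integral_sub hyw_int (hw_int.const_mul a),
    ← integral_sub hyv_int (hv_int.const_mul a)]
  refine integral_mono (hyw_int.sub (hw_int.const_mul a)) (hyv_int.sub (hv_int.const_mul a))
    fun y => ?_
  simpa only [Pi.sub_apply, ← sub_mul] using sub_mul_le_sub_mul_indicator_Ioi (hw01 y)

lemma tiltedMean_le_tiltedMean_indicator_Ioi {c : ℝ} (hc : 0 ≤ c) (hy : Integrable (fun y => y) μ)
    (hw : Measurable w) (hw01 : ∀ y, w y ∈ Icc 0 1) :
    tiltedMean μ c w ≤ tiltedMean μ c ((Ioi (tiltedMean μ c w)).indicator 1) := by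
  set a := tiltedMean μ c w
  have hw_mass : 0 ≤ ∫ y, w y ∂μ := integral_nonneg fun y => (hw01 y).1
  have hv_mass : 0 ≤ ∫ y, (Ioi a).indicator (1 : ℝ → ℝ) y ∂μ :=
    integral_nonneg fun y => (indicator_Ioi_one_mem_Icc a y).1
  have ha : a * (1 + c * ∫ y, w y ∂μ) = ∫ y, y ∂μ + c * ∫ y, y * w y ∂μ :=
    div_mul_cancel₀ _ (by positivity)
  have hkey := integral_sub_mul_le_integral_sub_mul_indicator_Ioi hy hw hw01 a
  rw [tiltedMean, le_div_iff₀ (by positivity)]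
  nlinarith [mul_le_mul_of_nonneg_left hkey hc]

end

theorem stmt_4_general (μ : Measure ℝ) [IsProbabilityMeasure μ] (C : ℝ)
    (hsupp : ∀ᵐ y ∂μ, y ∈ Set.Icc (-C) C) (Λ : ℝ) (hΛ : 1 < Λ) :
    sSup {x : ℝ | ∃ w : ℝ → ℝ, Measurable w ∧ (∀ y, w y ∈ Set.Icc (0:ℝ) 1) ∧
        x = (∫ y, y ∂μ + (Λ ^ 2 - 1) * ∫ y, y * w y ∂μ) /
              (1 + (Λ ^ 2 - 1) * ∫ y, w y ∂μ)}
    = sSup {x : ℝ | ∃ w : ℝ → ℝ, Measurable w ∧ (∀ y, w y ∈ Set.Icc (0:ℝ) 1) ∧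
        Monotone w ∧
        x = (∫ y, y ∂μ + (Λ ^ 2 - 1) * ∫ y, y * w y ∂μ) /
              (1 + (Λ ^ 2 - 1) * ∫ y, w y ∂μ)} := by
  have hc : 0 ≤ Λ ^ 2 - 1 := by nlinarith
  have hy : Integrable (fun y => y) μ := Integrable.of_mem_Icc (-C) C aemeasurable_id hsupp
  refine csSup_eq_csSup_of_forall_exists_le ?_ ?_
  · rintro x ⟨w, hw, hw01, rfl⟩
    exact ⟨_, ⟨_, measurable_const.indicator measurableSet_Ioi, indicator_Ioi_one_mem_Icc _,
      monotone_indicator_Ioi_one _, rfl⟩, tiltedMean_le_tiltedMean_indicator_Ioi hc hy hw hw01⟩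
  · rintro x ⟨w, hw, hw01, -, rfl⟩
    exact ⟨_, ⟨w, hw, hw01, rfl⟩, le_rfl⟩

/-- The supremum of `F(w)` over measurable `w : ℝ → [0,1]` equals the supremum over
nondecreasing measurable `w : ℝ → [0,1]`. -/
theorem stmt_4 (μ : Measure ℝ) [IsProbabilityMeasure μ] (C : ℝ) (hC : 0 < C)
    (hsupp : ∀ᵐ y ∂μ, y ∈ Set.Icc (-C) C) (Λ : ℝ) (hΛ : 1 < Λ) :
    sSup {x : ℝ | ∃ w : ℝ → ℝ, Measurable w ∧ (∀ y, w y ∈ Set.Icc (0:ℝ) 1) ∧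
        x = (∫ y, y ∂μ + (Λ ^ 2 - 1) * ∫ y, y * w y ∂μ) /
              (1 + (Λ ^ 2 - 1) * ∫ y, w y ∂μ)}
    = sSup {x : ℝ | ∃ w : ℝ → ℝ, Measurable w ∧ (∀ y, w y ∈ Set.Icc (0:ℝ) 1) ∧
        Monotone w ∧
        x = (∫ y, y ∂μ + (Λ ^ 2 - 1) * ∫ y, y * w y ∂μ) /
              (1 + (Λ ^ 2 - 1) * ∫ y, w y ∂μ)} :=
  stmt_4_general μ C hsupp Λ hΛ
end

section
/- Let μ be a probability measure on ℝ supported in [−C, C] and Λ > 1. Define F(w) = (∫ y dμ + (Λ²−1)·∫ y·w dμ)/(1 + (Λ²−1)·∫ w dμ). Then inf over all measurable w : ℝ → [0,1] of F(w) equals inf of F(w) over nonincreasing measurable w : ℝ → [0,1]. -/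
/-!
Bathtub principle. For `w : ℝ → [0,1]` with mass `m = ∫ w dμ`, pick a quantile `t` with
`μ (-∞, t) ≤ m ≤ μ (-∞, t]` and let `v` be `1` on `(-∞, t)`, `θ` at `t` and `0` on `(t, ∞)`, with
`θ ∈ [0,1]` chosen so that `∫ v dμ = m`. Then `(y - t) (w y - v y) ≥ 0` for every `y`, and
integrating gives `∫ y v ≤ ∫ y w`. The denominator of `F` only depends on the mass, so
`F v ≤ F w` with `v` nonincreasing. Hence the two sets of values are mutually coinitial and
their infima agree (also when they are unbounded below and `sInf` takes its junk value `0`).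
-/

open MeasureTheory Set Filter ProbabilityTheory

theorem StieltjesFunction.exists_leftLim_le_le (f : StieltjesFunction ℝ) {a b m : ℝ}
    (ha : f a ≤ m) (hb : m ≤ f b) : ∃ t, Function.leftLim f t ≤ m ∧ m ≤ f t := by
  set S := {s | a ≤ s ∧ m ≤ f s}
  have hS : S.Nonempty := ⟨max a b, le_max_left a b, hb.trans (f.mono (le_max_right a b))⟩
  have hS_bdd : BddBelow S := ⟨a, fun s hs => hs.1⟩
  refine ⟨sInf S, ?_, ?_⟩
  · have hlt : ∀ s < sInf S, f s ≤ m := by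
      intro s hs
      rcases lt_or_ge s a with hsa | has
      · exact (f.mono hsa.le).trans ha
      · by_contra! hms
        exact (csInf_le hS_bdd ⟨has, hms.le⟩).not_gt hs
    exact le_of_tendsto (f.mono.tendsto_leftLim _) (eventually_nhdsWithin_of_forall hlt)
  · have hgt : ∀ s > sInf S, m ≤ f s := by
      intro s hs
      obtain ⟨u, hu, hus⟩ := exists_lt_of_csInf_lt hS hs
      exact hu.2.trans (f.mono hus.le)
    exact ge_of_tendsto ((f.right_continuous _).mono_left (nhdsWithin_mono _ Ioi_subset_Ici_self))
      (eventually_nhdsWithin_of_forall hgt)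

theorem measureReal_Iic_eq_Iio_add_singleton (μ : Measure ℝ) [IsFiniteMeasure μ] (t : ℝ) :
    μ.real (Iic t) = μ.real (Iio t) + μ.real {t} := by
  rw [← Iio_union_right, measureReal_union (by simp) (measurableSet_singleton t)]

theorem ProbabilityTheory.leftLim_cdf (μ : Measure ℝ) [IsProbabilityMeasure μ] (t : ℝ) :
    Function.leftLim (cdf μ) t = μ.real (Iio t) := by
  have h_atom := (cdf μ).measure_singleton t
  rw [measure_cdf] at h_atom
  have h_atom_real : μ.real {t} = cdf μ t - Function.leftLim (cdf μ) t := by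
    rw [measureReal_def, h_atom,
      ENNReal.toReal_ofReal (sub_nonneg.2 ((cdf μ).mono.leftLim_le le_rfl))]
  rw [cdf_eq_real, measureReal_Iic_eq_Iio_add_singleton] at h_atom_real
  linarith

theorem exists_measureReal_Iio_le_le_Iic (μ : Measure ℝ) [IsProbabilityMeasure μ] {a b m : ℝ}
    (hsupp : ∀ᵐ y ∂μ, y ∈ Icc a b) (hm : m ∈ Icc 0 1) :
    ∃ t, μ.real (Iio t) ≤ m ∧ m ≤ μ.real (Iic t) := by
  have h_below : cdf μ (a - 1) = 0 := by
    have : μ (Iic (a - 1)) = 0 := by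
      refine measure_mono_null ?_ (ae_iff.1 hsupp)
      intro y (hy : y ≤ a - 1) (hy' : y ∈ Icc a b)
      linarith [hy'.1]
    rw [cdf_eq_real, measureReal_def, this, ENNReal.toReal_zero]
  have h_above : cdf μ b = 1 := by
    have : μ (Iic b) = 1 :=
      (mem_ae_iff_prob_eq_one measurableSet_Iic).1 (hsupp.mono fun y hy => hy.2)
    rw [cdf_eq_real, measureReal_def, this, ENNReal.toReal_one]
  obtain ⟨t, hleft, hright⟩ := (cdf μ).exists_leftLim_le_le (a := a - 1) (b := b)
    (h_below.trans_le hm.1) (h_above.symm ▸ hm.2)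
  exact ⟨t, leftLim_cdf μ t ▸ hleft, cdf_eq_real μ t ▸ hright⟩

noncomputable def threshold (t θ : ℝ) (y : ℝ) : ℝ :=
  (Iio t).indicator (fun _ => 1) y + ({t} : Set ℝ).indicator (fun _ => θ) y

section threshold

variable {t θ y : ℝ}

theorem threshold_of_lt (h : y < t) : threshold t θ y = 1 := by
  simp [threshold, h, h.ne]

theorem threshold_self : threshold t θ t = θ := by
  simp [threshold]

theorem threshold_of_gt (h : t < y) : threshold t θ y = 0 := by
  simp [threshold, h.not_gt, h.ne']

theorem measurable_threshold : Measurable (threshold t θ) :=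
  (measurable_const.indicator measurableSet_Iio).add
    (measurable_const.indicator (measurableSet_singleton t))

theorem threshold_mem_Icc (hθ : θ ∈ Icc (0 : ℝ) 1) : threshold t θ y ∈ Icc (0 : ℝ) 1 := by
  rcases lt_trichotomy y t with h | rfl | h
  · simp [threshold_of_lt h]
  · rwa [threshold_self]
  · simp [threshold_of_gt h]

theorem antitone_threshold (hθ : θ ∈ Icc (0 : ℝ) 1) : Antitone (threshold t θ) := by
  intro y₁ y₂ hy
  rcases lt_trichotomy y₁ t with h₁ | rfl | h₁
  · exact (threshold_of_lt h₁).symm ▸ (threshold_mem_Icc hθ).2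
  · rcases hy.eq_or_lt with rfl | h₂
    · rfl
    · rw [threshold_of_gt h₂, threshold_self]; exact hθ.1
  · rw [threshold_of_gt h₁, threshold_of_gt (h₁.trans_le hy)]

theorem integral_threshold (μ : Measure ℝ) [IsFiniteMeasure μ] :
    ∫ y, threshold t θ y ∂μ = μ.real (Iio t) + θ * μ.real {t} := by
  simp only [threshold]
  rw [integral_add ((integrable_const 1).indicator measurableSet_Iio)
      ((integrable_const θ).indicator (measurableSet_singleton t)),
    integral_indicator_const _ measurableSet_Iio,
    integral_indicator_const _ (measurableSet_singleton t)]
  simp [mul_comm]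

theorem sub_mul_sub_threshold_nonneg {w : ℝ} (hw : w ∈ Icc (0 : ℝ) 1) :
    0 ≤ (y - t) * (w - threshold t θ y) := by
  rcases lt_trichotomy y t with h | rfl | h
  · rw [threshold_of_lt h]; exact mul_nonneg_of_nonpos_of_nonpos (by linarith) (by linarith [hw.2])
  · simp
  · rw [threshold_of_gt h]; exact mul_nonneg (by linarith) (by linarith [hw.1])

end threshold

theorem MeasureTheory.Integrable.mul_of_mem_Icc {μ : Measure ℝ} {f w : ℝ → ℝ} (hf : Integrable f μ)
    (hw : Measurable w) (hw01 : ∀ y, w y ∈ Icc (0 : ℝ) 1) : Integrable (fun y => f y * w y) μ :=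
  hf.mul_bdd hw.aestronglyMeasurable
    (ae_of_all _ fun y => abs_le.2 ⟨by linarith [(hw01 y).1], (hw01 y).2⟩)

theorem integral_id_mul_threshold_le {μ : Measure ℝ} [IsFiniteMeasure μ] (hid : Integrable id μ)
    {w : ℝ → ℝ} (hw : Measurable w) (hw01 : ∀ y, w y ∈ Icc (0 : ℝ) 1) {t θ : ℝ}
    (hθ : θ ∈ Icc (0 : ℝ) 1) (heq : ∫ y, threshold t θ y ∂μ = ∫ y, w y ∂μ) :
    ∫ y, y * threshold t θ y ∂μ ≤ ∫ y, y * w y ∂μ := by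
  have hint_w : Integrable w μ := .of_mem_Icc 0 1 hw.aemeasurable (ae_of_all _ hw01)
  have hint_v : Integrable (threshold t θ) μ :=
    .of_mem_Icc 0 1 measurable_threshold.aemeasurable (ae_of_all _ fun _ => threshold_mem_Icc hθ)
  have hint_yw : Integrable (fun y => y * w y) μ := hid.mul_of_mem_Icc hw hw01
  have hint_yv : Integrable (fun y => y * threshold t θ y) μ :=
    hid.mul_of_mem_Icc measurable_threshold fun _ => threshold_mem_Icc hθ
  have h_expand : ∫ y, (y - t) * (w y - threshold t θ y) ∂μ
      = (∫ y, y * w y ∂μ - ∫ y, y * threshold t θ y ∂μ)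
        - t * (∫ y, w y ∂μ - ∫ y, threshold t θ y ∂μ) := by
    have h_pointwise : ∀ y, (y - t) * (w y - threshold t θ y)
        = (y * w y - y * threshold t θ y) - t * (w y - threshold t θ y) := fun y => by ring
    have hint_dy : Integrable (fun y => y * w y - y * threshold t θ y) μ := hint_yw.sub hint_yv
    have hint_dt : Integrable (fun y => t * (w y - threshold t θ y)) μ :=
      (hint_w.sub hint_v).const_mul t
    simp_rw [h_pointwise]
    rw [integral_sub hint_dy hint_dt,
      integral_sub hint_yw hint_yv, integral_const_mul, integral_sub hint_w hint_v]
  have h_nonneg : 0 ≤ ∫ y, (y - t) * (w y - threshold t θ y) ∂μ :=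
    integral_nonneg fun y => sub_mul_sub_threshold_nonneg (hw01 y)
  rw [h_expand, heq, sub_self, mul_zero, sub_zero, sub_nonneg] at h_nonneg
  exact h_nonneg

theorem exists_antitone_integral_eq_integral_id_mul_le (μ : Measure ℝ) [IsProbabilityMeasure μ]
    {a b : ℝ} (hsupp : ∀ᵐ y ∂μ, y ∈ Icc a b) {w : ℝ → ℝ} (hw : Measurable w)
    (hw01 : ∀ y, w y ∈ Icc (0 : ℝ) 1) :
    ∃ v : ℝ → ℝ, Measurable v ∧ (∀ y, v y ∈ Icc (0 : ℝ) 1) ∧ Antitone v ∧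
      ∫ y, v y ∂μ = ∫ y, w y ∂μ ∧ ∫ y, y * v y ∂μ ≤ ∫ y, y * w y ∂μ := by
  have hint_w : Integrable w μ := .of_mem_Icc 0 1 hw.aemeasurable (ae_of_all _ hw01)
  have hm : ∫ y, w y ∂μ ∈ Icc (0 : ℝ) 1 :=
    ⟨integral_nonneg fun y => (hw01 y).1,
      (integral_mono hint_w (integrable_const 1) fun y => (hw01 y).2).trans_eq (by simp)⟩
  obtain ⟨t, h_Iio, h_Iic⟩ := exists_measureReal_Iio_le_le_Iic μ hsupp hm
  obtain ⟨θ, hθ, hθm⟩ : ∃ θ ∈ Icc (0 : ℝ) 1, μ.real (Iio t) + θ * μ.real {t} = ∫ y, w y ∂μ := by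
    refine intermediate_value_Icc zero_le_one (by fun_prop) ⟨?_, ?_⟩
    · simpa using h_Iio
    · simpa [← measureReal_Iic_eq_Iio_add_singleton] using h_Iic
  have h_int : ∫ y, threshold t θ y ∂μ = ∫ y, w y ∂μ := (integral_threshold μ).trans hθm
  exact ⟨threshold t θ, measurable_threshold, fun _ => threshold_mem_Icc hθ, antitone_threshold hθ,
    h_int, integral_id_mul_threshold_le (.of_mem_Icc a b aemeasurable_id hsupp) hw hw01 hθ h_int⟩

theorem stmt_5_general (μ : Measure ℝ) [IsProbabilityMeasure μ] (C : ℝ)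
    (hsupp : ∀ᵐ y ∂μ, y ∈ Set.Icc (-C) C) (Λ : ℝ) (hΛ : 1 < Λ) :
    sInf {x : ℝ | ∃ w : ℝ → ℝ, Measurable w ∧ (∀ y, w y ∈ Set.Icc (0:ℝ) 1) ∧
        x = (∫ y, y ∂μ + (Λ ^ 2 - 1) * ∫ y, y * w y ∂μ) /
              (1 + (Λ ^ 2 - 1) * ∫ y, w y ∂μ)}
    = sInf {x : ℝ | ∃ w : ℝ → ℝ, Measurable w ∧ (∀ y, w y ∈ Set.Icc (0:ℝ) 1) ∧
        Antitone w ∧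
        x = (∫ y, y ∂μ + (Λ ^ 2 - 1) * ∫ y, y * w y ∂μ) /
              (1 + (Λ ^ 2 - 1) * ∫ y, w y ∂μ)} := by
  have hk : 0 ≤ Λ ^ 2 - 1 := by nlinarith
  refine csInf_eq_csInf_of_forall_exists_le ?_ ?_
  · rintro _ ⟨w, hw, hw01, rfl⟩
    obtain ⟨v, hv, hv01, hv_anti, h_int, h_le⟩ :=
      exists_antitone_integral_eq_integral_id_mul_le μ hsupp hw hw01
    refine ⟨_, ⟨v, hv, hv01, hv_anti, rfl⟩, ?_⟩
    have h_mass : 0 ≤ ∫ y, w y ∂μ := integral_nonneg fun y => (hw01 y).1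
    rw [h_int]
    gcongr
  · rintro _ ⟨w, hw, hw01, -, rfl⟩
    exact ⟨_, ⟨w, hw, hw01, rfl⟩, le_rfl⟩

/-- The infimum of `F(w)` over measurable `w : ℝ → [0,1]` equals the infimum over
nonincreasing measurable `w : ℝ → [0,1]`. -/
theorem stmt_5 (μ : Measure ℝ) [IsProbabilityMeasure μ] (C : ℝ) (hC : 0 < C)
    (hsupp : ∀ᵐ y ∂μ, y ∈ Set.Icc (-C) C) (Λ : ℝ) (hΛ : 1 < Λ) :
    sInf {x : ℝ | ∃ w : ℝ → ℝ, Measurable w ∧ (∀ y, w y ∈ Set.Icc (0:ℝ) 1) ∧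
        x = (∫ y, y ∂μ + (Λ ^ 2 - 1) * ∫ y, y * w y ∂μ) /
              (1 + (Λ ^ 2 - 1) * ∫ y, w y ∂μ)}
    = sInf {x : ℝ | ∃ w : ℝ → ℝ, Measurable w ∧ (∀ y, w y ∈ Set.Icc (0:ℝ) 1) ∧
        Antitone w ∧
        x = (∫ y, y ∂μ + (Λ ^ 2 - 1) * ∫ y, y * w y ∂μ) /
              (1 + (Λ ^ 2 - 1) * ∫ y, w y ∂μ)} :=
  stmt_5_general μ C hsupp Λ hΛ
end

section
/- Let a → (f(a), g(a)) be given where g(a) > 0 for all a in an index set A (linear-fractional objective), and consider maximizing f(a)/g(a). Charnes–Cooper correctness: for μ a probability measure on ℝ supported in [−C,C] and Λ > 1, with b = Λ²−1, c = ∫ y dμ, d = 1, the map w ↦ (w̃, ṽ) where w̃ = w/(b·∫ w dμ + d) and ṽ = 1/(b·∫ w dμ + d) is a bijection from {measurable w : ℝ → [0,1]} onto {(w̃, ṽ) : ṽ > 0, 0 ≤ w̃ ≤ ṽ pointwise, b·∫ w̃ dμ + d·ṽ = 1}, and under this bijection F(w) = (Λ²−1)·∫ y·w̃ dμ + c·ṽ,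 where F(w) = (c + b·∫ y·w dμ)/(1 + b·∫ w dμ). -/
/-!
The Charnes–Cooper substitution `w̃ = w / D`, `ṽ = 1 / D` with `D = b ∫ w dμ + d > 0`
clears the denominator of the linear-fractional objective: dividing numerator and
denominator of `F(w)` by `D` turns it into `b ∫ y w̃ dμ + c ṽ`, and the normalisation
`b ∫ w̃ dμ + d ṽ = 1` is the statement `D / D = 1`. Conversely a feasible `(w̃, ṽ)` forces
`D = 1 / ṽ`, so `w = w̃ / ṽ` is the unique preimage. Only `∫ f / D = (∫ f) / D` is used,
which holds for every `f` since a non-integrable function has integral `0`.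
-/

open MeasureTheory

namespace CharnesCooper

variable {α : Type*} [MeasurableSpace α] {μ : Measure α} {b d : ℝ}

lemma denom_pos (hb : 0 ≤ b) (hd : 0 < d) {w : α → ℝ} (hw : ∀ x, 0 ≤ w x) :
    0 < b * ∫ x, w x ∂μ + d := by
  have : 0 ≤ ∫ x, w x ∂μ := integral_nonneg hw
  positivity

lemma normalization_eq_one {w : α → ℝ} (hD : b * ∫ x, w x ∂μ + d ≠ 0) :
    b * (∫ x, w x / (b * ∫ z, w z ∂μ + d) ∂μ) + d * (1 / (b * ∫ z, w z ∂μ + d)) = 1 := by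
  rw [integral_div]
  field_simp

lemma objective_eq (c : ℝ) (g w : α → ℝ) (hD : b * ∫ x, w x ∂μ + d ≠ 0) :
    (c + b * ∫ x, g x * w x ∂μ) / (d + b * ∫ x, w x ∂μ) =
      b * (∫ x, g x * (w x / (b * ∫ z, w z ∂μ + d)) ∂μ) +
        c * (1 / (b * ∫ z, w z ∂μ + d)) := by
  simp_rw [← mul_div_assoc]
  rw [integral_div, add_comm d]
  field_simp
  ring

lemma denom_div_eq_one_div {wt : α → ℝ} {vt : ℝ} (hvt : vt ≠ 0)
    (hfeas : b * ∫ x, wt x ∂μ + d * vt = 1) :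
    b * (∫ x, wt x / vt ∂μ) + d = 1 / vt := by
  rw [integral_div]
  field_simp
  linarith

lemma eq_div_of_transform {w wt : α → ℝ} {vt : ℝ} (hD : b * ∫ x, w x ∂μ + d ≠ 0)
    (hwt : ∀ x, wt x = w x / (b * ∫ z, w z ∂μ + d))
    (hvt : vt = 1 / (b * ∫ z, w z ∂μ + d)) :
    w = fun x => wt x / vt := by
  funext x
  rw [hwt, hvt]
  field_simp

end CharnesCooper

open CharnesCooper in
theorem stmt_8_general (μ : Measure ℝ) (Λ : ℝ) (hΛ : 1 < Λ) :
    (∀ w : ℝ → ℝ, Measurable w → (∀ y, w y ∈ Set.Icc (0:ℝ) 1) →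
      (0 < 1 / ((Λ ^ 2 - 1) * (∫ y, w y ∂μ) + 1)) ∧
      (∀ y, 0 ≤ w y / ((Λ ^ 2 - 1) * (∫ z, w z ∂μ) + 1) ∧
            w y / ((Λ ^ 2 - 1) * (∫ z, w z ∂μ) + 1) ≤ 1 / ((Λ ^ 2 - 1) * (∫ z, w z ∂μ) + 1)) ∧
      ((Λ ^ 2 - 1) * (∫ y, w y / ((Λ ^ 2 - 1) * (∫ z, w z ∂μ) + 1) ∂μ) +
          1 * (1 / ((Λ ^ 2 - 1) * (∫ z, w z ∂μ) + 1)) = 1) ∧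
      ((∫ y, y ∂μ + (Λ ^ 2 - 1) * ∫ y, y * w y ∂μ) / (1 + (Λ ^ 2 - 1) * ∫ y, w y ∂μ)
        = (Λ ^ 2 - 1) * (∫ y, y * (w y / ((Λ ^ 2 - 1) * (∫ z, w z ∂μ) + 1)) ∂μ) +
            (∫ y, y ∂μ) * (1 / ((Λ ^ 2 - 1) * (∫ z, w z ∂μ) + 1)))) ∧
    (∀ (wt : ℝ → ℝ) (vt : ℝ), Measurable wt → 0 < vt →
      (∀ y, 0 ≤ wt y ∧ wt y ≤ vt) →
      (Λ ^ 2 - 1) * (∫ y, wt y ∂μ) + 1 * vt = 1 →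
      ∃! w : ℝ → ℝ, Measurable w ∧ (∀ y, w y ∈ Set.Icc (0:ℝ) 1) ∧
        (∀ y, wt y = w y / ((Λ ^ 2 - 1) * (∫ z, w z ∂μ) + 1)) ∧
        vt = 1 / ((Λ ^ 2 - 1) * (∫ z, w z ∂μ) + 1)) := by
  have hb : 0 ≤ Λ ^ 2 - 1 := by nlinarith
  refine ⟨fun w _ hw01 => ?_, fun wt vt hwt hvt hwtb hfeas => ?_⟩
  · have hD := denom_pos (μ := μ) hb one_pos fun y => (hw01 y).1
    exact ⟨one_div_pos.mpr hD,
      fun y => ⟨div_nonneg (hw01 y).1 hD.le, div_le_div_of_nonneg_right (hw01 y).2 hD.le⟩,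
      normalization_eq_one hD.ne', objective_eq _ (fun y => y) w hD.ne'⟩
  · have hD := denom_div_eq_one_div hvt.ne' hfeas
    refine ⟨fun y => wt y / vt, ⟨hwt.div_const vt, fun y => ⟨div_nonneg (hwtb y).1 hvt.le,
      (div_le_one hvt).mpr (hwtb y).2⟩, fun y => ?_, ?_⟩, ?_⟩
    · rw [hD, div_div, mul_one_div_cancel hvt.ne', div_one]
    · rw [hD, one_div_one_div]
    · rintro w ⟨-, hw01, hwt_eq, hvt_eq⟩
      have hD' := denom_pos (μ := μ) hb one_pos fun y => (hw01 y).1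
      exact eq_div_of_transform hD'.ne' hwt_eq hvt_eq

/-- Charnes–Cooper correctness: `w ↦ (w̃, ṽ)` with `w̃ = w/(b∫w + 1)`, `ṽ = 1/(b∫w + 1)`
is a bijection onto the feasible set of the linear program, and transforms the
linear-fractional objective `F(w)` into the linear objective `b·∫ y·w̃ dμ + c·ṽ`. -/
theorem stmt_8 (μ : Measure ℝ) [IsProbabilityMeasure μ] (C : ℝ) (hC : 0 < C)
    (hsupp : ∀ᵐ y ∂μ, y ∈ Set.Icc (-C) C) (Λ : ℝ) (hΛ : 1 < Λ) :
    (∀ w : ℝ → ℝ, Measurable w → (∀ y, w y ∈ Set.Icc (0:ℝ) 1) →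
      (0 < 1 / ((Λ ^ 2 - 1) * (∫ y, w y ∂μ) + 1)) ∧
      (∀ y, 0 ≤ w y / ((Λ ^ 2 - 1) * (∫ z, w z ∂μ) + 1) ∧
            w y / ((Λ ^ 2 - 1) * (∫ z, w z ∂μ) + 1) ≤ 1 / ((Λ ^ 2 - 1) * (∫ z, w z ∂μ) + 1)) ∧
      ((Λ ^ 2 - 1) * (∫ y, w y / ((Λ ^ 2 - 1) * (∫ z, w z ∂μ) + 1) ∂μ) +
          1 * (1 / ((Λ ^ 2 - 1) * (∫ z, w z ∂μ) + 1)) = 1) ∧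
      ((∫ y, y ∂μ + (Λ ^ 2 - 1) * ∫ y, y * w y ∂μ) / (1 + (Λ ^ 2 - 1) * ∫ y, w y ∂μ)
        = (Λ ^ 2 - 1) * (∫ y, y * (w y / ((Λ ^ 2 - 1) * (∫ z, w z ∂μ) + 1)) ∂μ) +
            (∫ y, y ∂μ) * (1 / ((Λ ^ 2 - 1) * (∫ z, w z ∂μ) + 1)))) ∧
    (∀ (wt : ℝ → ℝ) (vt : ℝ), Measurable wt → 0 < vt →
      (∀ y, 0 ≤ wt y ∧ wt y ≤ vt) →
      (Λ ^ 2 - 1) * (∫ y, wt y ∂μ) + 1 * vt = 1 →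
      ∃! w : ℝ → ℝ, Measurable w ∧ (∀ y, w y ∈ Set.Icc (0:ℝ) 1) ∧
        (∀ y, wt y = w y / ((Λ ^ 2 - 1) * (∫ z, w z ∂μ) + 1)) ∧
        vt = 1 / ((Λ ^ 2 - 1) * (∫ z, w z ∂μ) + 1)) :=
  stmt_8_general μ Λ hΛ
end

section
/- Let μ be a probability measure on ℝ supported in [−C, C] and Λ > 1. Let γ* ∈ [−C, C] be the unique solution of (Λ²−1)·∫ max(y − γ, 0) dμ = ∫ (γ − y) dμ. Then for every measurable w : ℝ → [0,1], F(w) ≤ γ*, where F(w) = (∫ y dμ + (Λ²−1)·∫ y·w dμ)/(1 + (Λ²−1)·∫ w dμ); and F(w_{γ*}) = γ* where w_{γ*} is the indicator of [γ*, ∞). Hence sup_w F(w) = γ*. -/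
open MeasureTheory

private lemma aux_int {μ : Measure ℝ} [IsProbabilityMeasure μ] {f : ℝ → ℝ} {B : ℝ}
    (hf : Measurable f) (hb : ∀ᵐ y ∂μ, |f y| ≤ B) : Integrable f μ :=
  (integrable_const B).mono' hf.aestronglyMeasurable (hb.mono fun y h => by simpa using h)

/-- If `γ*` solves `(Λ²−1)·∫ max(y−γ*,0) dμ = ∫ (γ*−y) dμ`, then `F(w) ≤ γ*` for all
measurable `w : ℝ → [0,1]`, and `F(1_{[γ*,∞)}) = γ*`; hence `sup_w F(w) = γ*`. -/
theorem stmt_9 (μ : Measure ℝ) [IsProbabilityMeasure μ] (C : ℝ) (hC : 0 < C)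
    (hsupp : ∀ᵐ y ∂μ, y ∈ Set.Icc (-C) C) (Λ : ℝ) (hΛ : 1 < Λ)
    (γs : ℝ) (hγs : γs ∈ Set.Icc (-C) C)
    (hroot : (Λ ^ 2 - 1) * ∫ y, max (y - γs) 0 ∂μ = ∫ y, (γs - y) ∂μ) :
    (∀ w : ℝ → ℝ, Measurable w → (∀ y, w y ∈ Set.Icc (0:ℝ) 1) →
      (∫ y, y ∂μ + (Λ ^ 2 - 1) * ∫ y, y * w y ∂μ) /
          (1 + (Λ ^ 2 - 1) * ∫ y, w y ∂μ) ≤ γs) ∧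
    (∫ y, y ∂μ + (Λ ^ 2 - 1) * ∫ y, y * Set.indicator (Set.Ici γs) 1 y ∂μ) /
        (1 + (Λ ^ 2 - 1) * ∫ y, Set.indicator (Set.Ici γs) 1 y ∂μ) = γs ∧
    sSup {x : ℝ | ∃ w : ℝ → ℝ, Measurable w ∧ (∀ y, w y ∈ Set.Icc (0:ℝ) 1) ∧
        x = (∫ y, y ∂μ + (Λ ^ 2 - 1) * ∫ y, y * w y ∂μ) /
              (1 + (Λ ^ 2 - 1) * ∫ y, w y ∂μ)} = γs := by
  have hK : 0 < Λ ^ 2 - 1 := by nlinarith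
  have hbdd : ∀ᵐ y ∂μ, |y| ≤ C := hsupp.mono fun y hy => abs_le.2 ⟨hy.1, hy.2⟩
  have hγC : |γs| ≤ C := abs_le.2 ⟨hγs.1, hγs.2⟩
  -- integrabilities
  have Iy : Integrable (fun y : ℝ => y) μ := aux_int measurable_id hbdd
  have Isub : Integrable (fun y : ℝ => y - γs) μ := Iy.sub (integrable_const γs)
  have Imax : Integrable (fun y : ℝ => max (y - γs) 0) μ := by
    refine aux_int (B := 2 * C) (by fun_prop) ?_
    refine hbdd.mono fun y hy => ?_
    rw [abs_le] at hy hγC ⊢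
    rcases max_cases (y - γs) 0 with ⟨h, _⟩ | ⟨h, _⟩ <;> rw [h] <;> constructor <;> linarith
  -- general facts about a weight function
  have key : ∀ w : ℝ → ℝ, Measurable w → (∀ y, w y ∈ Set.Icc (0:ℝ) 1) →
      Integrable w μ ∧ Integrable (fun y => (y - γs) * w y) μ ∧
      Integrable (fun y => y * w y) μ := by
    intro w hw hw01
    have Iw : Integrable w μ := aux_int hw (Filter.Eventually.of_forall fun y =>
      abs_le.2 ⟨by linarith [(hw01 y).1], (hw01 y).2⟩)
    have I1 : Integrable (fun y => (y - γs) * w y) μ := by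
      refine aux_int (B := 2 * C) ((measurable_id.sub measurable_const).mul hw) ?_
      exact hbdd.mono fun y hy => by
        rw [abs_mul]
        calc |y - γs| * |w y| ≤ (|y| + |γs|) * 1 := by
              refine mul_le_mul (abs_sub _ _) (abs_le.2 ⟨by linarith [(hw01 y).1], (hw01 y).2⟩)
                (abs_nonneg _) (by positivity)
          _ ≤ 2 * C := by linarith
    have I2 : Integrable (fun y => y * w y) μ := by
      have : (fun y => y * w y) = fun y => (y - γs) * w y + γs * w y := by
        funext y; ring
      rw [this]; exact I1.add (Iw.const_mul γs)
    exact ⟨Iw, I1, I2⟩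
  -- decomposition of the numerator for general w
  have decomp : ∀ w : ℝ → ℝ, Measurable w → (∀ y, w y ∈ Set.Icc (0:ℝ) 1) →
      (∫ y, y ∂μ = ∫ y, (y - γs) ∂μ + γs) ∧
      (∫ y, y * w y ∂μ = ∫ y, (y - γs) * w y ∂μ + γs * ∫ y, w y ∂μ) := by
    intro w hw hw01
    obtain ⟨Iw, I1, _⟩ := key w hw hw01
    constructor
    · have := integral_sub Iy (integrable_const (μ := μ) γs)
      simp at this; linarith [this]
    · have : (fun y => y * w y) = fun y => (y - γs) * w y + γs * w y := by
        funext y; ring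
      rw [this, integral_add I1 (Iw.const_mul γs), integral_const_mul]
  have hsub_eq : ∫ y, (y - γs) ∂μ = -((Λ ^ 2 - 1) * ∫ y, max (y - γs) 0 ∂μ) := by
    rw [hroot]
    have : (fun y : ℝ => γs - y) = fun y => -(y - γs) := by funext y; ring
    rw [this, integral_neg, neg_neg]
  -- part 1
  have part1 : ∀ w : ℝ → ℝ, Measurable w → (∀ y, w y ∈ Set.Icc (0:ℝ) 1) →
      (∫ y, y ∂μ + (Λ ^ 2 - 1) * ∫ y, y * w y ∂μ) /
          (1 + (Λ ^ 2 - 1) * ∫ y, w y ∂μ) ≤ γs := by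
    intro w hw hw01
    obtain ⟨Iw, I1, I2⟩ := key w hw hw01
    have hwnn : 0 ≤ ∫ y, w y ∂μ := integral_nonneg fun y => (hw01 y).1
    have hD : 0 < 1 + (Λ ^ 2 - 1) * ∫ y, w y ∂μ := by nlinarith
    rw [div_le_iff₀ hD]
    obtain ⟨e1, e2⟩ := decomp w hw hw01
    have hmono : ∫ y, (y - γs) * w y ∂μ ≤ ∫ y, max (y - γs) 0 ∂μ := by
      refine integral_mono I1 Imax fun y => ?_
      obtain ⟨h0, h1⟩ := hw01 y
      rcases le_or_gt γs y with h | h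
      · calc (y - γs) * w y ≤ (y - γs) * 1 := by nlinarith
          _ ≤ max (y - γs) 0 := by simpa using le_max_left (y - γs) 0
      · calc (y - γs) * w y ≤ 0 := mul_nonpos_of_nonpos_of_nonneg (by linarith) h0
          _ ≤ max (y - γs) 0 := le_max_right _ _
    rw [e1, e2]
    nlinarith [hsub_eq, hmono]
  -- the indicator weight
  have hindm : Measurable (Set.indicator (Set.Ici γs) (1 : ℝ → ℝ)) :=
    measurable_const.indicator measurableSet_Ici
  have hind01 : ∀ y, Set.indicator (Set.Ici γs) (1 : ℝ → ℝ) y ∈ Set.Icc (0:ℝ) 1 := by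
    intro y
    by_cases h : y ∈ Set.Ici γs <;> simp [Set.indicator, h]
  have part2 : (∫ y, y ∂μ + (Λ ^ 2 - 1) * ∫ y, y * Set.indicator (Set.Ici γs) 1 y ∂μ) /
        (1 + (Λ ^ 2 - 1) * ∫ y, Set.indicator (Set.Ici γs) 1 y ∂μ) = γs := by
    obtain ⟨Iw, I1, I2⟩ := key _ hindm hind01
    have hwnn : 0 ≤ ∫ y, Set.indicator (Set.Ici γs) (1 : ℝ → ℝ) y ∂μ :=
      integral_nonneg fun y => (hind01 y).1
    have hD : 0 < 1 + (Λ ^ 2 - 1) * ∫ y, Set.indicator (Set.Ici γs) (1 : ℝ → ℝ) y ∂μ := by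
      nlinarith
    rw [div_eq_iff (ne_of_gt hD)]
    obtain ⟨e1, e2⟩ := decomp _ hindm hind01
    have heq : ∫ y, (y - γs) * Set.indicator (Set.Ici γs) (1 : ℝ → ℝ) y ∂μ
        = ∫ y, max (y - γs) 0 ∂μ := by
      congr 1; funext y
      by_cases h : y ∈ Set.Ici γs
      · simp only [Set.indicator_of_mem h, Pi.one_apply, mul_one]
        rw [max_eq_left]; simp at h; linarith
      · simp only [Set.indicator_of_notMem h, mul_zero]
        rw [max_eq_right]; simp at h; linarith
    rw [e1, e2, heq]
    nlinarith [hsub_eq]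
  refine ⟨part1, part2, ?_⟩
  set S := {x : ℝ | ∃ w : ℝ → ℝ, Measurable w ∧ (∀ y, w y ∈ Set.Icc (0:ℝ) 1) ∧
      x = (∫ y, y ∂μ + (Λ ^ 2 - 1) * ∫ y, y * w y ∂μ) /
            (1 + (Λ ^ 2 - 1) * ∫ y, w y ∂μ)} with hS
  have hmem : γs ∈ S := ⟨_, hindm, hind01, part2.symm⟩
  have hub : ∀ x ∈ S, x ≤ γs := by
    rintro x ⟨w, hw, hw01, rfl⟩
    exact part1 w hw hw01
  exact le_antisymm (csSup_le ⟨γs, hmem⟩ hub) (le_csSup ⟨γs, hub⟩ hmem)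
end

section
/- Let μ be a probability measure on ℝ supported in [−C, C] and Λ > 1. The function γ ↦ F(w_γ), where w_γ is the indicator of [γ, ∞) and F(w) = (∫ y dμ + (Λ²−1)·∫ y·w dμ)/(1 + (Λ²−1)·∫ w dμ), satisfies: F(w_γ) ≥ γ if γ ≤ γ* and F(w_γ) ≤ γ if γ ≥ γ*, where γ* is the unique root of (Λ²−1)·∫ max(y−γ,0) dμ = ∫ (γ−y) dμ. -/
open MeasureTheory

/-- `F(1_{[γ,∞)}) ≥ γ` for `γ ≤ γ*` and `F(1_{[γ,∞)}) ≤ γ` for `γ ≥ γ*`, where `γ*` is the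
unique root of `(Λ²−1)·∫ max(y−γ,0) dμ = ∫ (γ−y) dμ`. -/
theorem stmt_11 (μ : Measure ℝ) [IsProbabilityMeasure μ] (C : ℝ) (hC : 0 < C)
    (hsupp : ∀ᵐ y ∂μ, y ∈ Set.Icc (-C) C) (Λ : ℝ) (hΛ : 1 < Λ)
    (γs : ℝ)
    (hroot : (Λ ^ 2 - 1) * ∫ y, max (y - γs) 0 ∂μ = ∫ y, (γs - y) ∂μ)
    (γ : ℝ) :
    (γ ≤ γs →
      γ ≤ (∫ y, y ∂μ + (Λ ^ 2 - 1) * ∫ y, y * Set.indicator (Set.Ici γ) 1 y ∂μ) /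
            (1 + (Λ ^ 2 - 1) * ∫ y, Set.indicator (Set.Ici γ) 1 y ∂μ)) ∧
    (γs ≤ γ →
      (∫ y, y ∂μ + (Λ ^ 2 - 1) * ∫ y, y * Set.indicator (Set.Ici γ) 1 y ∂μ) /
          (1 + (Λ ^ 2 - 1) * ∫ y, Set.indicator (Set.Ici γ) 1 y ∂μ) ≤ γ) := by
  have h2 : (0:ℝ) < Λ ^ 2 - 1 := by nlinarith
  have hbdd : ∀ (f : ℝ → ℝ) (M : ℝ), AEStronglyMeasurable f μ →
      (∀ᵐ y ∂μ, |f y| ≤ M) → Integrable f μ := fun f M hm hb =>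
    Integrable.mono' (integrable_const M) hm (by simpa using hb)
  have hid : Integrable (fun y => y) μ :=
    hbdd _ C measurable_id.aestronglyMeasurable
      (hsupp.mono fun y hy => abs_le.mpr ⟨hy.1, hy.2⟩)
  have hindm : ∀ a : ℝ, AEStronglyMeasurable (fun y => Set.indicator (Set.Ici a) (1:ℝ→ℝ) y) μ :=
    fun a => ((measurable_one.indicator measurableSet_Ici).aestronglyMeasurable)
  have hind : ∀ a : ℝ, Integrable (fun y => Set.indicator (Set.Ici a) (1:ℝ→ℝ) y) μ := by
    intro a
    refine hbdd _ 1 (hindm a) (Filter.Eventually.of_forall fun y => ?_)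
    by_cases hy : y ∈ Set.Ici a <;> simp [Set.indicator_of_mem, Set.indicator_of_notMem, hy]
  have hyind : ∀ a : ℝ, Integrable (fun y => y * Set.indicator (Set.Ici a) (1:ℝ→ℝ) y) μ := by
    intro a
    refine hbdd _ C (measurable_id.aestronglyMeasurable.mul (hindm a)) ?_
    refine hsupp.mono fun y hy => ?_
    by_cases h : y ∈ Set.Ici a
    · simp only [Set.indicator_of_mem h, Pi.one_apply, mul_one]
      exact abs_le.mpr ⟨hy.1, hy.2⟩
    · simp [Set.indicator_of_notMem h, hC.le]
  have hmax : ∀ a : ℝ, Integrable (fun y => max (y - a) 0) μ := by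
    intro a
    refine hbdd _ (C + |a|) ((measurable_id.sub measurable_const).max
      measurable_const).aestronglyMeasurable ?_
    refine hsupp.mono fun y hy => ?_
    have h1 : |y| ≤ C := abs_le.mpr ⟨hy.1, hy.2⟩
    rw [abs_le]
    constructor
    · have := abs_nonneg a; nlinarith [le_max_right (y - a) 0]
    · have h3 := abs_le.mp h1
      have h4 := neg_abs_le a
      exact max_le (by linarith) (by positivity)
  have hsub : ∀ a : ℝ, Integrable (fun y => a - y) μ := fun a => (integrable_const a).sub hid
  -- key identity: (y-a) * ind = max (y-a) 0
  have fact1 : ∀ a : ℝ, (∫ y, y * Set.indicator (Set.Ici a) 1 y ∂μ)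
      - a * (∫ y, Set.indicator (Set.Ici a) 1 y ∂μ) = ∫ y, max (y - a) 0 ∂μ := by
    intro a
    rw [← integral_const_mul, ← integral_sub (hyind a) (((hind a)).const_mul a)]
    refine integral_congr_ae (Filter.Eventually.of_forall fun y => ?_)
    by_cases hy : y ∈ Set.Ici a
    · have : a ≤ y := hy
      simp [Set.indicator_of_mem hy, max_eq_left (by linarith : (0:ℝ) ≤ y - a)]
    · have : ¬ a ≤ y := hy
      simp [Set.indicator_of_notMem hy, max_eq_right (by linarith : y - a ≤ (0:ℝ))]
  have fact2 : ∀ a : ℝ, (∫ y, (a - y) ∂μ) = a - ∫ y, y ∂μ := by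
    intro a
    rw [integral_sub (integrable_const a) hid, integral_const]
    simp
  -- g is antitone
  have gmono : ∀ a b : ℝ, a ≤ b →
      (Λ ^ 2 - 1) * (∫ y, max (y - b) 0 ∂μ) - ∫ y, (b - y) ∂μ ≤
      (Λ ^ 2 - 1) * (∫ y, max (y - a) 0 ∂μ) - ∫ y, (a - y) ∂μ := by
    intro a b hab
    have hM : (∫ y, max (y - b) 0 ∂μ) ≤ ∫ y, max (y - a) 0 ∂μ :=
      integral_mono (hmax b) (hmax a) fun y => max_le_max (by linarith) le_rfl
    have hS : (∫ y, (a - y) ∂μ) ≤ ∫ y, (b - y) ∂μ :=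
      integral_mono (hsub a) (hsub b) fun y => by dsimp; linarith
    nlinarith
  have hBpos : (0:ℝ) < 1 + (Λ ^ 2 - 1) * ∫ y, Set.indicator (Set.Ici γ) 1 y ∂μ := by
    have hB : (0:ℝ) ≤ ∫ y, Set.indicator (Set.Ici γ) 1 y ∂μ := by
      refine integral_nonneg fun y => ?_
      by_cases hy : y ∈ Set.Ici γ <;>
        simp [Set.indicator_of_mem, Set.indicator_of_notMem, hy]
    nlinarith
  -- key rearrangement
  have key : (∫ y, y ∂μ + (Λ ^ 2 - 1) * ∫ y, y * Set.indicator (Set.Ici γ) 1 y ∂μ)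
      - γ * (1 + (Λ ^ 2 - 1) * ∫ y, Set.indicator (Set.Ici γ) 1 y ∂μ)
      = (Λ ^ 2 - 1) * (∫ y, max (y - γ) 0 ∂μ) - ∫ y, (γ - y) ∂μ := by
    have h1 := fact1 γ
    have h2' := fact2 γ
    nlinarith [h1, h2']
  constructor
  · intro hγ
    have hg : (0:ℝ) ≤ (Λ ^ 2 - 1) * (∫ y, max (y - γ) 0 ∂μ) - ∫ y, (γ - y) ∂μ := by
      have := gmono γ γs hγ
      linarith [this, hroot.le, hroot.ge]
    rw [le_div_iff₀ hBpos]
    linarith [key]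
  · intro hγ
    have hg : (Λ ^ 2 - 1) * (∫ y, max (y - γ) 0 ∂μ) - ∫ y, (γ - y) ∂μ ≤ 0 := by
      have := gmono γs γ hγ
      linarith [this, hroot.le]
    rw [div_le_iff₀ hBpos]
    linarith [key]
end

section
/- Let μ be a probability measure on ℝ supported in [−C, C] and Λ > 1. Then the supremum of F(w) = (∫ y dμ + (Λ²−1)·∫ y·w dμ)/(1 + (Λ²−1)·∫ w dμ) over measurable w : ℝ → [0,1] is attained, i.e., there exists w* : ℝ → [0,1] measurable with F(w*) = sup_w F(w), and w* may be taken of the form w*(y) = 1_{y ≥ γ*} for some γ* ∈ [−C, C]. -/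
open MeasureTheory

private lemma integrable_of_bdd {μ : Measure ℝ} [IsFiniteMeasure μ] {f : ℝ → ℝ} {B : ℝ}
    (hf : Measurable f) (hb : ∀ᵐ y ∂μ, ‖f y‖ ≤ B) : Integrable f μ :=
  Integrable.mono' (integrable_const B) hf.aestronglyMeasurable hb

/-- The supremum of `F(w)` over measurable `w : ℝ → [0,1]` is attained by a threshold
indicator `1_{[γ*,∞)}` for some `γ* ∈ [−C, C]`. -/
theorem stmt_12 (μ : Measure ℝ) [IsProbabilityMeasure μ] (C : ℝ) (hC : 0 < C)
    (hsupp : ∀ᵐ y ∂μ, y ∈ Set.Icc (-C) C) (Λ : ℝ) (hΛ : 1 < Λ) :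
    ∃ γs ∈ Set.Icc (-C) C,
      IsGreatest {x : ℝ | ∃ w : ℝ → ℝ, Measurable w ∧ (∀ y, w y ∈ Set.Icc (0:ℝ) 1) ∧
          x = (∫ y, y ∂μ + (Λ ^ 2 - 1) * ∫ y, y * w y ∂μ) /
                (1 + (Λ ^ 2 - 1) * ∫ y, w y ∂μ)}
        ((∫ y, y ∂μ + (Λ ^ 2 - 1) * ∫ y, y * Set.indicator (Set.Ici γs) 1 y ∂μ) /
            (1 + (Λ ^ 2 - 1) * ∫ y, Set.indicator (Set.Ici γs) 1 y ∂μ)) := by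
  set a := Λ ^ 2 - 1 with ha_def
  have ha : 0 < a := by nlinarith
  -- integrability of y
  have hyI : Integrable (fun y : ℝ => y) μ := by
    refine integrable_of_bdd (B := C) measurable_id ?_
    filter_upwards [hsupp] with y hy
    rw [Real.norm_eq_abs]; exact abs_le.mpr ⟨hy.1, hy.2⟩
  set m := ∫ y, y ∂μ with hm_def
  -- integrability of the positive part functions
  have hposI : ∀ t : ℝ, Integrable (fun y => max (y - t) 0) μ := by
    intro t
    refine integrable_of_bdd (B := C + |t|) ((measurable_id.sub measurable_const).max measurable_const) ?_
    filter_upwards [hsupp] with y hy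
    rw [Real.norm_eq_abs, abs_le]
    constructor
    · have : (0:ℝ) ≤ max (y - t) 0 := le_max_right _ _
      linarith [abs_nonneg t, hC.le]
    · rcases max_choice (y - t) 0 with h | h <;> rw [h]
      · have := hy.2; have := neg_abs_le t; linarith
      · positivity
  -- integrability for admissible w
  have hwI : ∀ w : ℝ → ℝ, Measurable w → (∀ y, w y ∈ Set.Icc (0:ℝ) 1) →
      Integrable w μ := by
    intro w hw hw01
    refine integrable_of_bdd (B := 1) hw ?_
    filter_upwards with y
    rw [Real.norm_eq_abs, abs_le]
    exact ⟨by linarith [(hw01 y).1], (hw01 y).2⟩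
  have hywI : ∀ w : ℝ → ℝ, Measurable w → (∀ y, w y ∈ Set.Icc (0:ℝ) 1) →
      Integrable (fun y => y * w y) μ := by
    intro w hw hw01
    refine integrable_of_bdd (B := C) (measurable_id.mul hw) ?_
    filter_upwards [hsupp] with y hy
    rw [Real.norm_eq_abs, abs_mul]
    calc |y| * |w y| ≤ C * 1 := by
          apply mul_le_mul (abs_le.mpr ⟨hy.1, hy.2⟩)
            (abs_le.mpr ⟨by linarith [(hw01 y).1], (hw01 y).2⟩) (abs_nonneg _)
            hC.le
      _ = C := mul_one C
  -- the function g
  set g : ℝ → ℝ := fun t => ∫ y, max (y - t) 0 ∂μ with hg_def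
  -- g is Lipschitz hence continuous
  have hg_lip : LipschitzWith 1 g := by
    refine LipschitzWith.of_dist_le_mul (fun s t => ?_)
    rw [Real.dist_eq, Real.dist_eq, NNReal.coe_one, one_mul]
    have hsub : g s - g t = ∫ y, (max (y - s) 0 - max (y - t) 0) ∂μ :=
      (integral_sub (hposI s) (hposI t)).symm
    rw [hsub]
    have hb : ∀ᵐ y ∂μ, ‖max (y - s) 0 - max (y - t) 0‖ ≤ |s - t| := by
      filter_upwards with y
      rw [Real.norm_eq_abs]
      calc |max (y - s) 0 - max (y - t) 0| ≤ max |y - s - (y - t)| |0 - 0| :=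
            abs_max_sub_max_le_max _ _ _ _
        _ = |s - t| := by
            rw [sub_zero, abs_zero, max_eq_left (abs_nonneg _),
              show y - s - (y - t) = -(s - t) by ring, abs_neg]
    calc ‖∫ y, (max (y - s) 0 - max (y - t) 0) ∂μ‖ ≤ |s - t| * (μ Set.univ).toReal :=
          norm_integral_le_of_norm_le_const hb
      _ = |s - t| := by simp
  -- the function h and its sign
  set h : ℝ → ℝ := fun t => m + a * g t - t with hh_def
  have hh_cont : Continuous h :=
    (continuous_const.add (continuous_const.mul hg_lip.continuous)).sub continuous_id
  have hm_lb : -C ≤ m := by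
    have := integral_mono_ae (integrable_const (-C)) hyI
      (by filter_upwards [hsupp] with y hy using hy.1)
    simpa using this
  have hm_ub : m ≤ C := by
    have := integral_mono_ae hyI (integrable_const C)
      (by filter_upwards [hsupp] with y hy using hy.2)
    simpa using this
  have hgC : g C = 0 := by
    have hcong : (fun y => max (y - C) 0) =ᵐ[μ] (fun _ => (0:ℝ)) := by
      filter_upwards [hsupp] with y hy using max_eq_right (by linarith [hy.2])
    calc g C = ∫ _, (0:ℝ) ∂μ := integral_congr_ae hcong
      _ = 0 := integral_zero _ _
  have hgnC : g (-C) = m + C := by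
    have hcong : (fun y => max (y - (-C)) 0) =ᵐ[μ] (fun y => y + C) := by
      filter_upwards [hsupp] with y hy
      rw [sub_neg_eq_add]
      exact max_eq_left (by linarith [hy.1])
    calc g (-C) = ∫ y, (y + C) ∂μ := integral_congr_ae hcong
      _ = m + C := by rw [integral_add hyI (integrable_const C)]; simp [hm_def]
  -- IVT: find t with h t = 0
  have hzero : (0:ℝ) ∈ h '' Set.Icc (-C) C := by
    apply intermediate_value_Icc' (by linarith) hh_cont.continuousOn
    constructor
    · show h C ≤ 0
      rw [hh_def]; simp only [hgC]; linarith
    · show 0 ≤ h (-C)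
      rw [hh_def]; simp only [hgnC]; nlinarith
  obtain ⟨t, htmem, ht0⟩ := hzero
  have hfix : m + a * g t = t := by
    have : m + a * g t - t = 0 := ht0
    linarith
  -- the key inequality for any admissible w
  have hkey : ∀ w : ℝ → ℝ, Measurable w → (∀ y, w y ∈ Set.Icc (0:ℝ) 1) →
      (∫ y, y * w y ∂μ) - t * ∫ y, w y ∂μ ≤ g t := by
    intro w hw hw01
    have h1 : (∫ y, y * w y ∂μ) - t * ∫ y, w y ∂μ = ∫ y, (y - t) * w y ∂μ := by
      rw [← integral_const_mul, ← integral_sub (hywI w hw hw01)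
        ((hwI w hw hw01).const_mul t)]
      congr 1; ext y; ring
    rw [h1]
    refine integral_mono_ae ?_ (hposI t) ?_
    · have := ((hywI w hw hw01).sub ((hwI w hw hw01).const_mul t))
      refine this.congr ?_
      filter_upwards with y
      simp only [Pi.sub_apply]; ring
    · filter_upwards with y
      rcases le_total (y - t) 0 with hle | hle
      · exact le_trans (mul_nonpos_of_nonpos_of_nonneg hle (hw01 y).1) (le_max_right _ _)
      · refine le_trans ?_ (le_max_left _ _)
        nlinarith [(hw01 y).2]
  -- the threshold indicator
  set ws : ℝ → ℝ := Set.indicator (Set.Ici t) 1 with hws_def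
  have hws_meas : Measurable ws := measurable_const.indicator measurableSet_Ici
  have hws01 : ∀ y, ws y ∈ Set.Icc (0:ℝ) 1 := by
    intro y
    rw [hws_def, Set.indicator_apply]
    split <;> simp
  have hws_eq : (∫ y, y * ws y ∂μ) - t * ∫ y, ws y ∂μ = g t := by
    have h1 : (∫ y, y * ws y ∂μ) - t * ∫ y, ws y ∂μ = ∫ y, (y - t) * ws y ∂μ := by
      rw [← integral_const_mul, ← integral_sub (hywI ws hws_meas hws01)
        ((hwI ws hws_meas hws01).const_mul t)]
      congr 1; ext y; ring
    rw [h1, hg_def]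
    congr 1; ext y
    rw [hws_def, Set.indicator_apply]
    by_cases hy : y ∈ Set.Ici t
    · simp only [hy, if_pos]
      rw [Pi.one_apply, mul_one, max_eq_left (by simpa [sub_nonneg] using hy)]
    · simp only [hy, if_neg, not_false_iff]
      rw [mul_zero, max_eq_right]
      simp only [Set.mem_Ici, not_le] at hy
      linarith
  -- denominators are positive
  have hden : ∀ w : ℝ → ℝ, Measurable w → (∀ y, w y ∈ Set.Icc (0:ℝ) 1) →
      0 < 1 + a * ∫ y, w y ∂μ := by
    intro w hw hw01
    have : 0 ≤ ∫ y, w y ∂μ := integral_nonneg fun y => (hw01 y).1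
    nlinarith
  -- the value at the threshold indicator is t
  have hval : (m + a * ∫ y, y * ws y ∂μ) / (1 + a * ∫ y, ws y ∂μ) = t := by
    rw [div_eq_iff (hden ws hws_meas hws01).ne']
    nlinarith [hws_eq, hfix]
  refine ⟨t, htmem, ?_, ?_⟩
  · exact ⟨ws, hws_meas, hws01, rfl⟩
  · rintro x ⟨w, hw, hw01, rfl⟩
    rw [hval]
    rw [div_le_iff₀ (hden w hw hw01)]
    have := hkey w hw hw01
    nlinarith [hkey w hw hw01, hfix]
end

section
/- Let μ be a probability measure on ℝ supported in [−C, C] and Λ > 1. The infimum of F(w) = (∫ y dμ + (Λ²−1)·∫ y·w dμ)/(1 + (Λ²−1)·∫ w dμ) over measurable w : ℝ → [0,1] is attained by an indicator of a lower half-line: there exists γ_* ∈ [−C, C] such that w(y) = 1_{y ≤ γ_*} achieves the infimum. -/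
open MeasureTheory

/-- The infimum of `F(w)` over measurable `w : ℝ → [0,1]` is attained by an indicator of a
lower half-line `1_{(−∞,γ*]}` for some `γ* ∈ [−C, C]`. -/
theorem stmt_13 (μ : Measure ℝ) [IsProbabilityMeasure μ] (C : ℝ) (hC : 0 < C)
    (hsupp : ∀ᵐ y ∂μ, y ∈ Set.Icc (-C) C) (Λ : ℝ) (hΛ : 1 < Λ) :
    ∃ γs ∈ Set.Icc (-C) C,
      IsLeast {x : ℝ | ∃ w : ℝ → ℝ, Measurable w ∧ (∀ y, w y ∈ Set.Icc (0:ℝ) 1) ∧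
          x = (∫ y, y ∂μ + (Λ ^ 2 - 1) * ∫ y, y * w y ∂μ) /
                (1 + (Λ ^ 2 - 1) * ∫ y, w y ∂μ)}
        ((∫ y, y ∂μ + (Λ ^ 2 - 1) * ∫ y, y * Set.indicator (Set.Iic γs) 1 y ∂μ) /
            (1 + (Λ ^ 2 - 1) * ∫ y, Set.indicator (Set.Iic γs) 1 y ∂μ)) := by
  set a := Λ ^ 2 - 1 with ha_def
  have ha : 0 < a := by nlinarith
  set m := ∫ y, y ∂μ with hm_def
  have hIntC : Integrable (fun _ : ℝ => C) μ := integrable_const C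
  have hid : Integrable (fun y : ℝ => y) μ := by
    refine hIntC.mono' measurable_id.aestronglyMeasurable ?_
    filter_upwards [hsupp] with y hy
    rw [Real.norm_eq_abs, abs_le]
    exact ⟨hy.1, hy.2⟩
  -- bounds on the mean
  have hmub : m ≤ C := by
    have := integral_mono_ae hid hIntC (hsupp.mono fun y hy => hy.2)
    simpa using this
  have hmlb : -C ≤ m := by
    have := integral_mono_ae (integrable_const (-C)) hid (hsupp.mono fun y hy => hy.1)
    simpa using this
  -- the auxiliary function H
  set H : ℝ → ℝ := fun t => ∫ y, min (y - t) 0 ∂μ with hH_def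
  have hHint : ∀ t : ℝ, Integrable (fun y => min (y - t) 0) μ := by
    intro t
    refine (integrable_const (C + |t|)).mono'
      (((measurable_id.sub measurable_const).min measurable_const).aestronglyMeasurable) ?_
    filter_upwards [hsupp] with y hy
    rw [Real.norm_eq_abs]
    have h1 : |min (y - t) 0| ≤ max |y - t| |(0:ℝ)| := abs_min_le_max_abs_abs
    have h2 : |y - t| ≤ C + |t| := by
      have : |y| ≤ C := abs_le.2 ⟨hy.1, hy.2⟩
      calc |y - t| ≤ |y| + |t| := abs_sub _ _
        _ ≤ C + |t| := by linarith
    simp only [abs_zero] at h1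
    calc |min (y - t) 0| ≤ max |y - t| 0 := h1
      _ ≤ C + |t| := by
        rw [max_le_iff]
        exact ⟨h2, by positivity⟩
  have hHlip : LipschitzWith 1 H := by
    apply LipschitzWith.of_dist_le_mul
    intro t s
    rw [Real.dist_eq, Real.dist_eq, NNReal.coe_one, one_mul]
    have heq : H t - H s = ∫ y, (min (y - t) 0 - min (y - s) 0) ∂μ :=
      (integral_sub (hHint t) (hHint s)).symm
    rw [heq]
    have hb : ∀ᵐ y ∂μ, ‖min (y - t) 0 - min (y - s) 0‖ ≤ |t - s| := by
      refine Filter.Eventually.of_forall fun y => ?_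
      rw [Real.norm_eq_abs]
      have h1 : |min (y - t) 0 - min (y - s) 0| ≤ max |(y - t) - (y - s)| |(0:ℝ) - 0| :=
        abs_min_sub_min_le_max _ _ _ _
    -- |(y-t)-(y-s)| = |s - t| = |t - s|
      have h2 : (y - t) - (y - s) = s - t := by ring
      rw [h2, sub_self, abs_zero] at h1
      calc |min (y - t) 0 - min (y - s) 0| ≤ max |s - t| 0 := h1
        _ = |s - t| := max_eq_left (abs_nonneg _)
        _ = |t - s| := abs_sub_comm _ _
    calc |∫ y, (min (y - t) 0 - min (y - s) 0) ∂μ|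
        ≤ |t - s| * (μ Set.univ).toReal := by
          simpa [Real.norm_eq_abs] using
            norm_integral_le_of_norm_le_const (μ := μ) hb
      _ = |t - s| := by simp
  -- the function G and the intermediate value argument
  set G : ℝ → ℝ := fun t => m - t + a * H t with hG_def
  have hGcont : Continuous G :=
    (continuous_const.sub continuous_id).add (continuous_const.mul hHlip.continuous)
  have hHmC : H (-C) = 0 := by
    have hae : (fun y => min (y - (-C)) 0) =ᵐ[μ] fun _ => (0:ℝ) := by
      filter_upwards [hsupp] with y hy
      rw [min_eq_right]
      linarith [hy.1]
    rw [hH_def]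
    simp only
    rw [integral_congr_ae hae, integral_zero]
  have hHC : H C = m - C := by
    have hae : (fun y => min (y - C) 0) =ᵐ[μ] fun y => y - C := by
      filter_upwards [hsupp] with y hy
      rw [min_eq_left]
      linarith [hy.2]
    rw [hH_def]
    simp only
    rw [integral_congr_ae hae, integral_sub hid (integrable_const C)]
    simp [hm_def]
  have hGmC : 0 ≤ G (-C) := by
    simp only [hG_def, hHmC]
    nlinarith
  have hGC : G C ≤ 0 := by
    simp only [hG_def, hHC]
    nlinarith
  obtain ⟨γ, hγmem, hγeq⟩ :=
    intermediate_value_Icc' (by linarith : -C ≤ C) hGcont.continuousOn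
      (Set.mem_Icc.2 ⟨hGC, hGmC⟩)
  have hGγ : m - γ + a * H γ = 0 := hγeq
  refine ⟨γ, hγmem, ?_⟩
  -- the indicator function
  set ind := Set.indicator (Set.Iic γ) (1 : ℝ → ℝ) with hind_def
  have hindmeas : Measurable ind := measurable_const.indicator measurableSet_Iic
  have hind01 : ∀ y, ind y ∈ Set.Icc (0:ℝ) 1 := by
    intro y
    rw [hind_def, Set.indicator_apply]
    split <;> norm_num
  have hIind : Integrable ind μ := by
    refine (integrable_const (1:ℝ)).mono' hindmeas.aestronglyMeasurable ?_
    refine Filter.Eventually.of_forall fun y => ?_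
    rw [Real.norm_eq_abs, abs_le]
    exact ⟨by linarith [(hind01 y).1], (hind01 y).2⟩
  have hIyind : Integrable (fun y => y * ind y) μ := by
    refine hIntC.mono' (measurable_id.mul hindmeas).aestronglyMeasurable ?_
    filter_upwards [hsupp] with y hy
    rw [Real.norm_eq_abs, abs_mul]
    calc |y| * |ind y| ≤ |y| * 1 := by
          refine mul_le_mul_of_nonneg_left ?_ (abs_nonneg _)
          rw [abs_le]
          exact ⟨by linarith [(hind01 y).1], (hind01 y).2⟩
      _ = |y| := mul_one _
      _ ≤ C := abs_le.2 ⟨hy.1, hy.2⟩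
  set I := ∫ y, ind y ∂μ with hI_def
  have hI0 : 0 ≤ I := integral_nonneg fun y => (hind01 y).1
  have hkey : ∀ y : ℝ, y * ind y = min (y - γ) 0 + γ * ind y := by
    intro y
    by_cases h : y ≤ γ
    · rw [hind_def, Set.indicator_of_mem (Set.mem_Iic.2 h), Pi.one_apply,
        min_eq_left (by linarith : y - γ ≤ 0)]
      ring
    · rw [hind_def, Set.indicator_of_notMem (by simpa using h), min_eq_right (by linarith : (0:ℝ) ≤ y - γ)]
      ring
  have hIyval : ∫ y, y * ind y ∂μ = H γ + γ * I := by
    have : (fun y => y * ind y) = fun y => min (y - γ) 0 + γ * ind y := funext hkey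
    rw [this, integral_add (hHint γ) (hIind.const_mul γ), integral_const_mul, hH_def, hI_def]
  have hD : (0:ℝ) < 1 + a * I := by nlinarith
  have hval : (m + a * ∫ y, y * ind y ∂μ) / (1 + a * I) = γ := by
    rw [hIyval, div_eq_iff hD.ne']
    linear_combination hGγ
  rw [hval]
  constructor
  · exact ⟨ind, hindmeas, hind01, hval.symm⟩
  · rintro x ⟨w, hwm, hw01, rfl⟩
    have hIw : Integrable w μ := by
      refine (integrable_const (1:ℝ)).mono' hwm.aestronglyMeasurable ?_
      refine Filter.Eventually.of_forall fun y => ?_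
      rw [Real.norm_eq_abs, abs_le]
      exact ⟨by linarith [(hw01 y).1], (hw01 y).2⟩
    have hIyw : Integrable (fun y => y * w y) μ := by
      refine hIntC.mono' (measurable_id.mul hwm).aestronglyMeasurable ?_
      filter_upwards [hsupp] with y hy
      rw [Real.norm_eq_abs, abs_mul]
      calc |y| * |w y| ≤ |y| * 1 := by
            refine mul_le_mul_of_nonneg_left ?_ (abs_nonneg _)
            rw [abs_le]
            exact ⟨by linarith [(hw01 y).1], (hw01 y).2⟩
        _ = |y| := mul_one _
        _ ≤ C := abs_le.2 ⟨hy.1, hy.2⟩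
    set B := ∫ y, w y ∂μ with hB_def
    set A := ∫ y, y * w y ∂μ with hA_def
    have hB0 : 0 ≤ B := integral_nonneg fun y => (hw01 y).1
    have hInt2 : Integrable (fun y => (y - γ) * w y) μ := by
      have : (fun y => (y - γ) * w y) = fun y => y * w y - γ * w y := by
        funext y; ring
      rw [this]
      exact hIyw.sub (hIw.const_mul γ)
    have hptw : ∀ y : ℝ, min (y - γ) 0 ≤ (y - γ) * w y := by
      intro y
      rcases le_or_gt y γ with h | h
      · rw [min_eq_left (by linarith : y - γ ≤ 0)]
        nlinarith [(hw01 y).1, (hw01 y).2]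
      · rw [min_eq_right (by linarith : (0:ℝ) ≤ y - γ)]
        exact mul_nonneg (by linarith) (hw01 y).1
    have hHA : H γ ≤ A - γ * B := by
      have h1 : H γ ≤ ∫ y, (y - γ) * w y ∂μ :=
        integral_mono (hHint γ) hInt2 hptw
      have h2 : ∫ y, (y - γ) * w y ∂μ = A - γ * B := by
        have heq : (fun y => (y - γ) * w y) = fun y => y * w y - γ * w y := by
          funext y; ring
        rw [heq, integral_sub hIyw (hIw.const_mul γ), integral_const_mul, hA_def, hB_def]
      linarith [h1, h2.le, h2.ge]
    have hD2 : (0:ℝ) < 1 + a * B := by nlinarith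
    rw [le_div_iff₀ hD2]
    nlinarith [mul_le_mul_of_nonneg_left hHA ha.le]
end

section
/- Let μ be a probability measure on ℝ supported in [−C, C], Λ > 1, and π ∈ (0,1). Then sup over measurable q : ℝ → [1/(Λπ), Λ/π] of (∫ y·q(y) dμ)/(∫ q(y) dμ) equals sup over measurable w : ℝ → [0,1] of (∫ y dμ + (Λ²−1)·∫ y·w dμ)/(1 + (Λ²−1)·∫ w dμ), and similarly for infima. -/
open MeasureTheory

lemma key_int (μ : Measure ℝ) [IsProbabilityMeasure μ] (C : ℝ)
    (hsupp : ∀ᵐ y ∂μ, y ∈ Set.Icc (-C) C)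
    (α c : ℝ) (hα0 : 0 < α) (w : ℝ → ℝ) (hw : Measurable w)
    (hwb : ∀ y, w y ∈ Set.Icc (0:ℝ) 1) :
    (∫ y, y * (α * (1 + c * w y)) ∂μ) / (∫ y, α * (1 + c * w y) ∂μ)
      = (∫ y, y ∂μ + c * ∫ y, y * w y ∂μ) / (1 + c * ∫ y, w y ∂μ) := by
  have hid : Integrable (fun y : ℝ => y) μ := by
    refine (integrable_const C).mono' measurable_id.aestronglyMeasurable ?_
    filter_upwards [hsupp] with y hy
    rw [Real.norm_eq_abs, abs_le]; exact ⟨hy.1, hy.2⟩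
  have hiw : Integrable w μ := by
    refine (integrable_const (1:ℝ)).mono' hw.aestronglyMeasurable ?_
    filter_upwards with y
    rw [Real.norm_eq_abs, abs_le]
    exact ⟨le_trans (by norm_num) (hwb y).1, (hwb y).2⟩
  have hiyw : Integrable (fun y => y * w y) μ := by
    refine (integrable_const C).mono' (measurable_id.mul hw).aestronglyMeasurable ?_
    filter_upwards [hsupp] with y hy
    have h1 : |y| ≤ C := abs_le.mpr ⟨hy.1, hy.2⟩
    have h2 : |w y| ≤ 1 := abs_le.mpr ⟨le_trans (by norm_num) (hwb y).1, (hwb y).2⟩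
    calc |y * w y| = |y| * |w y| := abs_mul _ _
      _ ≤ C * 1 := by
          apply mul_le_mul h1 h2 (abs_nonneg _)
          exact le_trans (abs_nonneg y) h1
      _ = C := mul_one C
  have hnum : (∫ y, y * (α * (1 + c * w y)) ∂μ)
      = α * (∫ y, y ∂μ + c * ∫ y, y * w y ∂μ) := by
    have : (fun y : ℝ => y * (α * (1 + c * w y)))
        = fun y => α * (y + c * (y * w y)) := by funext y; ring
    rw [this, integral_const_mul, integral_add hid (hiyw.const_mul c),
      integral_const_mul]
  have hden : (∫ y, α * (1 + c * w y) ∂μ) = α * (1 + c * ∫ y, w y ∂μ) := by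
    rw [integral_const_mul, integral_add (integrable_const 1) (hiw.const_mul c),
      integral_const, integral_const_mul]
    simp
  rw [hnum, hden, mul_div_mul_left _ _ (ne_of_gt hα0)]

/-- The sup (resp. inf) of the weighted mean over `q : ℝ → [1/(Λπ), Λ/π]` equals the sup
(resp. inf) of `F(w)` over `w : ℝ → [0,1]`. -/
theorem stmt_16 (μ : Measure ℝ) [IsProbabilityMeasure μ] (C : ℝ) (hC : 0 < C)
    (hsupp : ∀ᵐ y ∂μ, y ∈ Set.Icc (-C) C) (Λ : ℝ) (hΛ : 1 < Λ)
    (π : ℝ) (hπ : π ∈ Set.Ioo (0:ℝ) 1) :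
    (sSup {x : ℝ | ∃ q : ℝ → ℝ, Measurable q ∧
        (∀ y, q y ∈ Set.Icc (1 / (Λ * π)) (Λ / π)) ∧
        x = (∫ y, y * q y ∂μ) / (∫ y, q y ∂μ)}
      = sSup {x : ℝ | ∃ w : ℝ → ℝ, Measurable w ∧ (∀ y, w y ∈ Set.Icc (0:ℝ) 1) ∧
        x = (∫ y, y ∂μ + (Λ ^ 2 - 1) * ∫ y, y * w y ∂μ) /
              (1 + (Λ ^ 2 - 1) * ∫ y, w y ∂μ)}) ∧
    (sInf {x : ℝ | ∃ q : ℝ → ℝ, Measurable q ∧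
        (∀ y, q y ∈ Set.Icc (1 / (Λ * π)) (Λ / π)) ∧
        x = (∫ y, y * q y ∂μ) / (∫ y, q y ∂μ)}
      = sInf {x : ℝ | ∃ w : ℝ → ℝ, Measurable w ∧ (∀ y, w y ∈ Set.Icc (0:ℝ) 1) ∧
        x = (∫ y, y ∂μ + (Λ ^ 2 - 1) * ∫ y, y * w y ∂μ) /
              (1 + (Λ ^ 2 - 1) * ∫ y, w y ∂μ)}) := by
  obtain ⟨hπ0, hπ1⟩ := hπ
  have hΛ0 : (0:ℝ) < Λ := lt_trans one_pos hΛ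
  set α : ℝ := 1 / (Λ * π) with hαdef
  set c : ℝ := Λ ^ 2 - 1 with hcdef
  have hα0 : 0 < α := by rw [hαdef]; positivity
  have hc0 : 0 < c := by rw [hcdef]; nlinarith
  have hβ : Λ / π = α * (1 + c) := by
    rw [hαdef, hcdef]; field_simp; ring
  have hset : {x : ℝ | ∃ q : ℝ → ℝ, Measurable q ∧
        (∀ y, q y ∈ Set.Icc (1 / (Λ * π)) (Λ / π)) ∧
        x = (∫ y, y * q y ∂μ) / (∫ y, q y ∂μ)}
      = {x : ℝ | ∃ w : ℝ → ℝ, Measurable w ∧ (∀ y, w y ∈ Set.Icc (0:ℝ) 1) ∧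
        x = (∫ y, y ∂μ + (Λ ^ 2 - 1) * ∫ y, y * w y ∂μ) /
              (1 + (Λ ^ 2 - 1) * ∫ y, w y ∂μ)} := by
    ext x
    simp only [Set.mem_setOf_eq]
    constructor
    · rintro ⟨q, hqm, hqb, rfl⟩
      refine ⟨fun y => (q y / α - 1) / c, ((hqm.div_const α).sub_const 1).div_const c, ?_, ?_⟩
      · intro y
        obtain ⟨h1, h2⟩ := hqb y
        rw [← hαdef] at h1
        rw [hβ] at h2
        constructor
        · apply div_nonneg _ hc0.le
          have : (1:ℝ) ≤ q y / α := (one_le_div hα0).mpr h1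
          linarith
        · rw [div_le_one hc0]
          have : q y / α ≤ 1 + c := by
            rw [div_le_iff₀ hα0]; linarith [mul_comm α (1 + c)] ;
          linarith
      · have hq : ∀ y, q y = α * (1 + c * ((q y / α - 1) / c)) := by
          intro y; field_simp; ring
        rw [← hcdef]
        rw [show (fun y => y * q y) = (fun y => y * (α * (1 + c * ((q y / α - 1) / c)))) from funext fun y => by rw [← hq y],
            show (fun y => q y) = (fun y => α * (1 + c * ((q y / α - 1) / c))) from funext fun y => by rw [← hq y]]
        exact key_int μ C hsupp α c hα0 _
          (((hqm.div_const α).sub_const 1).div_const c)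
          (by
            intro y
            obtain ⟨h1, h2⟩ := hqb y
            rw [← hαdef] at h1
            rw [hβ] at h2
            constructor
            · apply div_nonneg _ hc0.le
              have : (1:ℝ) ≤ q y / α := (one_le_div hα0).mpr h1
              linarith
            · rw [div_le_one hc0]
              have : q y / α ≤ 1 + c := by rw [div_le_iff₀ hα0]; linarith [mul_comm α (1 + c)]
              linarith)
    · rintro ⟨w, hwm, hwb, rfl⟩
      refine ⟨fun y => α * (1 + c * w y), (measurable_const.mul
        (measurable_const.add (measurable_const.mul hwm))), ?_, ?_⟩
      · intro y
        obtain ⟨h1, h2⟩ := hwb y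
        rw [← hαdef, hβ]
        dsimp only
        constructor
        · nlinarith [mul_nonneg (mul_nonneg hα0.le hc0.le) h1]
        · nlinarith [mul_nonneg (mul_nonneg hα0.le hc0.le) (sub_nonneg.mpr h2)]
      · rw [← hcdef]
        exact (key_int μ C hsupp α c hα0 w hwm hwb).symm
  rw [hset]
  exact ⟨rfl, rfl⟩
end

section
/- Let μ be a probability measure on ℝ supported in [−C, C] and let α, β be reals with 0 < α ≤ β. Then sup over measurable q : ℝ → [α, β] of (∫ y·q dμ)/(∫ q dμ) is attained by a function of the form q(y) = α·1_{y < γ} + β·1_{y ≥ γ} for some γ ∈ [−C, C]. -/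
open MeasureTheory

/-- A measurable, a.e.-bounded function is integrable w.r.t. a probability measure. -/
lemma stmt17_int_bdd {μ : Measure ℝ} [IsProbabilityMeasure μ] (f : ℝ → ℝ)
    (hf : Measurable f) (K : ℝ) (hb : ∀ᵐ y ∂μ, |f y| ≤ K) : Integrable f μ :=
  Integrable.mono' (integrable_const K) hf.aestronglyMeasurable hb

/-- The sup of the weighted mean over measurable `q : ℝ → [α, β]` (with `0 < α ≤ β`) is
attained by a two-valued threshold function `q(y) = α·1_{y<γ} + β·1_{y≥γ}`. -/
theorem stmt_17 (μ : Measure ℝ) [IsProbabilityMeasure μ] (C : ℝ) (hC : 0 < C)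
    (hsupp : ∀ᵐ y ∂μ, y ∈ Set.Icc (-C) C)
    (α β : ℝ) (hα : 0 < α) (hαβ : α ≤ β) :
    ∃ γ ∈ Set.Icc (-C) C,
      IsGreatest {x : ℝ | ∃ q : ℝ → ℝ, Measurable q ∧
          (∀ y, q y ∈ Set.Icc α β) ∧
          x = (∫ y, y * q y ∂μ) / (∫ y, q y ∂μ)}
        ((∫ y, y * (if y < γ then α else β) ∂μ) /
            (∫ y, (if y < γ then α else β) ∂μ)) := by
  have hβ : 0 < β := hα.trans_le hαβ
  have hyC : ∀ᵐ y ∂μ, |y| ≤ C := hsupp.mono fun y hy => abs_le.mpr ⟨hy.1, hy.2⟩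
  -- measurability and bounds of threshold functions
  have hqm : ∀ t : ℝ, Measurable (fun y => if y < t then α else β) := fun t =>
    Measurable.ite (measurableSet_lt measurable_id measurable_const)
      measurable_const measurable_const
  have hqb : ∀ t y : ℝ, (if y < t then α else β) ∈ Set.Icc α β := by
    intro t y
    by_cases h : y < t <;> simp [h, hαβ, le_refl]
  -- generic integrability facts
  have hint_q : ∀ q : ℝ → ℝ, Measurable q → (∀ y, q y ∈ Set.Icc α β) →
      Integrable q μ := by
    intro q hm hb
    refine stmt17_int_bdd q hm β (Filter.Eventually.of_forall fun y => ?_)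
    rw [abs_of_pos (hα.trans_le (hb y).1)]; exact (hb y).2
  have hint_tq : ∀ (t : ℝ) (q : ℝ → ℝ), Measurable q → (∀ y, q y ∈ Set.Icc α β) →
      Integrable (fun y => (y - t) * q y) μ := by
    intro t q hm hb
    refine stmt17_int_bdd _ ((measurable_id.sub measurable_const).mul hm)
      ((C + |t|) * β) (hyC.mono fun y hy => ?_)
    rw [abs_mul]
    have h1 : |y - t| ≤ C + |t| := (abs_sub _ _).trans (by linarith)
    have h2 : |q y| ≤ β := by
      rw [abs_of_pos (hα.trans_le (hb y).1)]; exact (hb y).2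
    exact mul_le_mul h1 h2 (abs_nonneg _) (by positivity)
  have hint_yq : ∀ q : ℝ → ℝ, Measurable q → (∀ y, q y ∈ Set.Icc α β) →
      Integrable (fun y => y * q y) μ := by
    intro q hm hb
    refine stmt17_int_bdd _ (measurable_id.mul hm) (C * β) (hyC.mono fun y hy => ?_)
    rw [abs_mul]
    have h2 : |q y| ≤ β := by
      rw [abs_of_pos (hα.trans_le (hb y).1)]; exact (hb y).2
    exact mul_le_mul hy h2 (abs_nonneg _) hC.le
  -- the key function F
  set F : ℝ → ℝ := fun t => ∫ y, (y - t) * (if y < t then α else β) ∂μ with hF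
  -- continuity of F
  have hint_min : ∀ t : ℝ, Integrable (fun y => min (y - t) 0) μ := by
    intro t
    refine stmt17_int_bdd _ ((measurable_id.sub measurable_const).min measurable_const)
      (C + |t|) (hyC.mono fun y hy => ?_)
    have : |min (y - t) 0| ≤ |y - t| := by
      rcases le_or_gt (y - t) 0 with h | h
      · rw [min_eq_left h]
      · rw [min_eq_right h.le]; simp [abs_nonneg]
    exact this.trans ((abs_sub _ _).trans (by linarith))
  have hint_id : Integrable (fun y : ℝ => y) μ :=
    stmt17_int_bdd _ measurable_id C hyC
  have hFeq : ∀ t, F t = β * ((∫ y, y ∂μ) - t) + (α - β) * ∫ y, min (y - t) 0 ∂μ := by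
    intro t
    have hpt : ∀ y, (y - t) * (if y < t then α else β)
        = β * (y - t) + (α - β) * min (y - t) 0 := by
      intro y
      by_cases h : y < t
      · rw [if_pos h, min_eq_left (by linarith)]; ring
      · rw [if_neg h, min_eq_right (by push_neg at h; linarith)]; ring
    calc F t = ∫ y, (β * (y - t) + (α - β) * min (y - t) 0) ∂μ := by
              simp only [hF]; exact integral_congr_ae (Filter.Eventually.of_forall hpt)
      _ = (∫ y, β * (y - t) ∂μ) + ∫ y, (α - β) * min (y - t) 0 ∂μ :=
            integral_add ((hint_id.sub (integrable_const t)).const_mul β)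
              ((hint_min t).const_mul (α - β))
      _ = β * ((∫ y, y ∂μ) - t) + (α - β) * ∫ y, min (y - t) 0 ∂μ := by
            rw [integral_const_mul, integral_const_mul,
              integral_sub hint_id (integrable_const t), integral_const]
            simp
  have hGlip : LipschitzWith 1 (fun t => ∫ y, min (y - t) 0 ∂μ) := by
    refine LipschitzWith.of_dist_le_mul fun s t => ?_
    rw [Real.dist_eq, Real.dist_eq, NNReal.coe_one, one_mul]
    have h1 : (∫ y, min (y - s) 0 ∂μ) - (∫ y, min (y - t) 0 ∂μ)
        = ∫ y, (min (y - s) 0 - min (y - t) 0) ∂μ :=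
      (integral_sub (hint_min s) (hint_min t)).symm
    rw [h1]
    calc |∫ y, (min (y - s) 0 - min (y - t) 0) ∂μ|
        ≤ ∫ y, |min (y - s) 0 - min (y - t) 0| ∂μ := by
          simpa using norm_integral_le_integral_norm (fun y => min (y - s) 0 - min (y - t) 0) (μ := μ)
      _ ≤ ∫ _, |s - t| ∂μ := by
          refine integral_mono ((hint_min s).sub (hint_min t)).abs (integrable_const _)
            fun y => ?_
          have := abs_min_sub_min_le_max (y - s) 0 (y - t) 0
          simp only [sub_zero, sub_sub_sub_cancel_left] at this
          calc |min (y - s) 0 - min (y - t) 0| ≤ max |t - s| |0 - 0| := by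
                  refine (abs_min_sub_min_le_max _ _ _ _).trans ?_
                  apply max_le_max _ le_rfl
                  rw [show y - s - (y - t) = t - s by ring]
            _ = |s - t| := by rw [abs_sub_comm]; simp
      _ = |s - t| := by rw [integral_const]; simp
  have hFc : Continuous F := by
    rw [show F = fun t => β * ((∫ y, y ∂μ) - t) + (α - β) * ∫ y, min (y - t) 0 ∂μ
      from funext hFeq]
    exact (continuous_const.mul (continuous_const.sub continuous_id)).add
      (continuous_const.mul hGlip.continuous)
  -- endpoint signs
  have hFnegC : 0 ≤ F (-C) := by
    refine integral_nonneg_of_ae (hsupp.mono fun y hy => ?_)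
    have h1 : 0 ≤ y - (-C) := by have := hy.1; linarith
    have h2 : 0 ≤ (if y < -C then α else β) := by
      by_cases h : y < -C <;> simp [h, hα.le, hβ.le]
    exact mul_nonneg h1 h2
  have hFC : F C ≤ 0 := by
    refine integral_nonpos_of_ae (hsupp.mono fun y hy => ?_)
    have h1 : y - C ≤ 0 := by have := hy.2; linarith
    have h2 : 0 ≤ (if y < C then α else β) := by
      by_cases h : y < C <;> simp [h, hα.le, hβ.le]
    exact mul_nonpos_of_nonpos_of_nonneg h1 h2
  -- intermediate value theorem
  have hmem : (0 : ℝ) ∈ F '' Set.Icc (-C) C := by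
    apply intermediate_value_Icc' (by linarith) hFc.continuousOn
    exact ⟨hFC, hFnegC⟩
  obtain ⟨γ, hγmem, hγ0⟩ := hmem
  -- basic facts about the threshold function at γ
  have hIq := hint_q _ (hqm γ) (hqb γ)
  have hIpos : 0 < ∫ y, (if y < γ then α else β) ∂μ := by
    have : α ≤ ∫ y, (if y < γ then α else β) ∂μ := by
      have := integral_mono (integrable_const α) hIq fun y => (hqb γ y).1
      simpa using this
    linarith
  -- splitting lemma
  have hsplit : ∀ q : ℝ → ℝ, Measurable q → (∀ y, q y ∈ Set.Icc α β) →
      (∫ y, (y - γ) * q y ∂μ) = (∫ y, y * q y ∂μ) - γ * ∫ y, q y ∂μ := by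
    intro q hm hb
    have hpt : ∀ y, (y - γ) * q y = y * q y - γ * q y := fun y => by ring
    rw [integral_congr_ae (Filter.Eventually.of_forall hpt),
      integral_sub (hint_yq q hm hb) ((hint_q q hm hb).const_mul γ),
      integral_const_mul]
  have hFγ : (∫ y, y * (if y < γ then α else β) ∂μ)
      = γ * ∫ y, (if y < γ then α else β) ∂μ := by
    have h := hsplit _ (hqm γ) (hqb γ)
    have h0 : F γ = 0 := hγ0
    simp only [hF] at h0
    rw [h0] at h
    linarith
  have hval : (∫ y, y * (if y < γ then α else β) ∂μ) /
      (∫ y, (if y < γ then α else β) ∂μ) = γ := by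
    rw [hFγ, mul_div_assoc, div_self hIpos.ne', mul_one]
  refine ⟨γ, hγmem, ⟨⟨fun y => if y < γ then α else β, hqm γ, hqb γ, rfl⟩, ?_⟩⟩
  rintro x ⟨q, hm, hb, rfl⟩
  rw [hval]
  have hIq' := hint_q q hm hb
  have hIpos' : 0 < ∫ y, q y ∂μ := by
    have : α ≤ ∫ y, q y ∂μ := by
      have := integral_mono (integrable_const α) hIq' fun y => (hb y).1
      simpa using this
    linarith
  rw [div_le_iff₀ hIpos']
  have hmono : (∫ y, (y - γ) * q y ∂μ) ≤ F γ := by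
    refine integral_mono (hint_tq γ q hm hb) (hint_tq γ _ (hqm γ) (hqb γ)) fun y => ?_
    by_cases h : y < γ
    · rw [if_pos h]
      exact mul_le_mul_of_nonpos_left (hb y).1 (by linarith)
    · rw [if_neg h]
      push_neg at h
      exact mul_le_mul_of_nonneg_left (hb y).2 (by linarith)
  rw [hγ0, hsplit q hm hb] at hmono
  linarith
end

section
/- Let μ be a probability measure on ℝ supported in [−C, C] with mean μ̃, and let 0 < α ≤ β. Then for every measurable q : ℝ → [α, β], the weighted mean m(q) = (∫ y·q dμ)/(∫ q dμ) satisfies |m(q) − μ̃| ≤ 2C·(β − α)/β. -/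
/-!
Subtracting the mean `m` of `f` kills the constant part `α` of the weight:
`∫ f q - m ∫ q = ∫ (f - m) (q - α)`. Since `|f - m| ≤ b - a` and `q - α ≥ 0`, this is at most
`(b - a) (∫ q - α)` in absolute value, so the weighted mean is within `(b - a) (1 - α / ∫ q)` of `m`,
and this bound increases with `∫ q ≤ β`.
-/

open MeasureTheory

namespace MeasureTheory

variable {Ω : Type*} [MeasurableSpace Ω] {μ : Measure Ω} [IsProbabilityMeasure μ]

lemma integral_mem_Icc {f : Ω → ℝ} {a b : ℝ} (hf : Integrable f μ)
    (hfab : ∀ᵐ x ∂μ, f x ∈ Set.Icc a b) : ∫ x, f x ∂μ ∈ Set.Icc a b :=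
  (convex_Icc a b).integral_mem isClosed_Icc hfab hf

lemma ae_abs_sub_integral_le {f : Ω → ℝ} {a b : ℝ} (hf : Integrable f μ)
    (hfab : ∀ᵐ x ∂μ, f x ∈ Set.Icc a b) : ∀ᵐ x ∂μ, |f x - ∫ x, f x ∂μ| ≤ b - a := by
  obtain ⟨hma, hmb⟩ := integral_mem_Icc hf hfab
  filter_upwards [hfab] with x ⟨hxa, hxb⟩
  exact abs_sub_le_iff.2 ⟨by linarith, by linarith⟩

lemma integral_sub_integral_mul_sub {f g : Ω → ℝ} (hf : Integrable f μ) (hg : Integrable g μ)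
    (hfg : Integrable (fun x => f x * g x) μ) (c : ℝ) :
    ∫ x, (f x - ∫ x, f x ∂μ) * (g x - c) ∂μ =
      ∫ x, f x * g x ∂μ - (∫ x, f x ∂μ) * ∫ x, g x ∂μ := by
  set m := ∫ x, f x ∂μ
  have hexpand : ∀ x, (f x - m) * (g x - c) = (f x * g x - m * g x) - (c * f x - c * m) :=
    fun x => by ring
  have hfg_mg : Integrable (fun x => f x * g x - m * g x) μ := hfg.sub (hg.const_mul m)
  have hcf_cm : Integrable (fun x => c * f x - c * m) μ := (hf.const_mul c).sub (integrable_const _)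
  simp_rw [hexpand]
  rw [integral_sub hfg_mg hcf_cm,
    integral_sub hfg (hg.const_mul m), integral_sub (hf.const_mul c) (integrable_const _),
    integral_const_mul, integral_const_mul, integral_const]
  simp [m]

lemma abs_integral_sub_integral_mul_sub_le {f q : Ω → ℝ} {a b α : ℝ} (hf : Integrable f μ)
    (hfab : ∀ᵐ x ∂μ, f x ∈ Set.Icc a b) (hq : Integrable q μ) (hqα : ∀ᵐ x ∂μ, α ≤ q x) :
    |∫ x, (f x - ∫ x, f x ∂μ) * (q x - α) ∂μ| ≤ (b - a) * (∫ x, q x ∂μ - α) :=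
  calc |∫ x, (f x - ∫ x, f x ∂μ) * (q x - α) ∂μ|
      ≤ ∫ x, (b - a) * (q x - α) ∂μ := by
        rw [← Real.norm_eq_abs]
        refine norm_integral_le_of_norm_le ((hq.sub (integrable_const α)).const_mul (b - a)) ?_
        filter_upwards [ae_abs_sub_integral_le hf hfab, hqα] with x hfx hqx
        rw [Real.norm_eq_abs, abs_mul, abs_of_nonneg (sub_nonneg.2 hqx)]
        exact mul_le_mul_of_nonneg_right hfx (sub_nonneg.2 hqx)
    _ = (b - a) * (∫ x, q x ∂μ - α) := by
        rw [integral_const_mul, integral_sub hq (integrable_const α)]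
        simp

theorem abs_integral_mul_div_integral_sub_integral_le {f q : Ω → ℝ} {a b α β : ℝ}
    (hf : AEMeasurable f μ) (hfab : ∀ᵐ x ∂μ, f x ∈ Set.Icc a b)
    (hq : AEMeasurable q μ) (hqαβ : ∀ᵐ x ∂μ, q x ∈ Set.Icc α β) (hα : 0 < α) :
    |(∫ x, f x * q x ∂μ) / (∫ x, q x ∂μ) - ∫ x, f x ∂μ| ≤ (b - a) * (β - α) / β := by
  have hf_int : Integrable f μ := .of_mem_Icc a b hf hfab
  have hq_int : Integrable q μ := .of_mem_Icc α β hq hqαβ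
  have hfq_int : Integrable (fun x => f x * q x) μ := by
    refine hq_int.bdd_mul hf.aestronglyMeasurable (c := max |a| |b|) ?_
    filter_upwards [hfab] with x hx
    exact abs_le_max_abs_abs hx.1 hx.2
  obtain ⟨hDα, hDβ⟩ := integral_mem_Icc hq_int hqαβ
  set D := ∫ x, q x ∂μ
  have hD : 0 < D := hα.trans_le hDα
  have hβ : 0 < β := hD.trans_le hDβ
  have hba : 0 ≤ b - a := by
    obtain ⟨x, hxa, hxb⟩ := hfab.exists
    linarith
  calc |(∫ x, f x * q x ∂μ) / D - ∫ x, f x ∂μ|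
      = |∫ x, (f x - ∫ x, f x ∂μ) * (q x - α) ∂μ| / D := by
        rw [integral_sub_integral_mul_sub hf_int hq_int hfq_int, div_sub' hD.ne', abs_div,
          abs_of_pos hD, mul_comm D]
    _ ≤ (b - a) * (D - α) / D := by
        gcongr
        exact abs_integral_sub_integral_mul_sub_le hf_int hfab hq_int (hqαβ.mono fun _ h => h.1)
    _ = (b - a) * (1 - α / D) := by rw [mul_div_assoc, sub_div, div_self hD.ne']
    _ ≤ (b - a) * (1 - α / β) := by gcongr
    _ = (b - a) * (β - α) / β := by rw [mul_div_assoc, sub_div, div_self hβ.ne']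

end MeasureTheory

theorem stmt_18_general (μ : Measure ℝ) [IsProbabilityMeasure μ] (C : ℝ)
    (hsupp : ∀ᵐ y ∂μ, y ∈ Set.Icc (-C) C)
    (α β : ℝ) (hα : 0 < α)
    (q : ℝ → ℝ) (hq : Measurable q) (hqb : ∀ y, q y ∈ Set.Icc α β) :
    |(∫ y, y * q y ∂μ) / (∫ y, q y ∂μ) - ∫ y, y ∂μ| ≤ 2 * C * (β - α) / β := by
  have h := abs_integral_mul_div_integral_sub_integral_le aemeasurable_id hsupp
    hq.aemeasurable (Filter.Eventually.of_forall hqb) hα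
  rwa [sub_neg_eq_add, ← two_mul] at h

/-- For measurable `q : ℝ → [α, β]` with `0 < α ≤ β`, the weighted mean deviates from the
mean `μ̃` by at most `2C(β − α)/β`. -/
theorem stmt_18 (μ : Measure ℝ) [IsProbabilityMeasure μ] (C : ℝ) (hC : 0 < C)
    (hsupp : ∀ᵐ y ∂μ, y ∈ Set.Icc (-C) C)
    (α β : ℝ) (hα : 0 < α) (hαβ : α ≤ β)
    (q : ℝ → ℝ) (hq : Measurable q) (hqb : ∀ y, q y ∈ Set.Icc α β) :
    |(∫ y, y * q y ∂μ) / (∫ y, q y ∂μ) - ∫ y, y ∂μ| ≤ 2 * C * (β - α) / β :=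
  stmt_18_general μ C hsupp α β hα q hq hqb
end
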